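/- Let T>1, let k be a positive integer, let c_j>0, and let real constants b_{jj}^{i,αβ} (α,β=0,1,2) satisfy the null condition Σ_{α,β=0}^2 b_{jj}^{i,αβ}X_αX_β = 0 for all X∈ℝ³ with X₀²=c_j²(X₁²+X₂²). Then there exists a constant C₂>0, independent of T, such that for every smooth function v^j on ℝ²×[0,T) and all (x,t) with x≠0: |Σ_{α,β=0}^2 b_{jj}^{i,αβ}∂_α v^j(x,t)∂_β v^j(x,t)|_k ≤ C₂ Σ_{|b+c|≤k} |Z^j Γ^b v^j(x,t)||Γ^c ∂ v^j(x,t)|. -/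

import Mathlib

open Real MeasureTheory Filter

noncomputable section

/-- A space-time point `p = (x₁, x₂, t)`. -/
abbrev Pt : Type := ℝ × ℝ × ℝ

def dir3 : Fin 3 → Pt
  | 0 => (0, 0, 1)
  | 1 => (1, 0, 0)
  | 2 => (0, 1, 0)

/-- Partial derivative: `pd 0` is `∂_t`, `pd 1` is `∂_{x₁}`, `pd 2` is `∂_{x₂}`. -/
def pd (α : Fin 3) (v : Pt → ℝ) : Pt → ℝ := fun p => fderiv ℝ v p (dir3 α)

/-- The vector fields `Γ₀ = ∂_t, Γ₁ = ∂₁, Γ₂ = ∂₂, Γ₃ = Ω = x₁∂₂ − x₂∂₁,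
`Γ₄ = S = t∂_t + x₁∂₁ + x₂∂₂`. -/
def Gam : Fin 5 → (Pt → ℝ) → (Pt → ℝ)
  | 0 => pd 0
  | 1 => pd 1
  | 2 => pd 2
  | 3 => fun v p => p.1 * pd 2 v p - p.2.1 * pd 1 v p
  | 4 => fun v p => p.2.2 * pd 0 v p + p.1 * pd 1 v p + p.2.1 * pd 2 v p

/-- The monomial `Γ^a = Γ₀^{a₀}Γ₁^{a₁}Γ₂^{a₂}Γ₃^{a₃}Γ₄^{a₄}`. -/
def GamPow (a : Fin 5 → ℕ) (v : Pt → ℝ) : Pt → ℝ :=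
  (Gam 0)^[a 0] ((Gam 1)^[a 1] ((Gam 2)^[a 2] ((Gam 3)^[a 3] ((Gam 4)^[a 4] v))))

/-- Multi-indices `a` of length 5 with `|a| ≤ k`. -/
def MIdx (k : ℕ) : Finset (Fin 5 → ℕ) :=
  (Finset.range (k + 1)).biUnion fun n => Finset.Nat.antidiagonalTuple 5 n

/-- The pointwise norm `|v(x,t)|_k = Σ_{|a| ≤ k} |Γ^a v(x,t)|`. -/
def ptNorm (k : ℕ) (v : Pt → ℝ) (p : Pt) : ℝ := ∑ a ∈ MIdx k, |GamPow a v p|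

/-- `|x|`, the euclidean norm of the spatial part. -/
def rad (p : Pt) : ℝ := Real.sqrt (p.1 ^ 2 + p.2.1 ^ 2)

/-- The good derivative `Z_α^i = c_i ∂_α + (x_α/|x|) ∂_t` (for `α = 1, 2`). -/
def Zd (ci : ℝ) (α : Fin 3) (v : Pt → ℝ) (p : Pt) : ℝ :=
  ci * pd α v p + ((if α = 1 then p.1 else p.2.1) / rad p) * pd 0 v p

/-- `|Z^i v| = |Z₁^i v| + |Z₂^i v|`. -/
def Znorm (ci : ℝ) (v : Pt → ℝ) (p : Pt) : ℝ := |Zd ci 1 v p| + |Zd ci 2 v p|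
/-- Pairs of multi-indices `(b, c)` with `|b| + |c| ≤ k`. -/
def pairIdx (k : ℕ) : Finset ((Fin 5 → ℕ) × (Fin 5 → ℕ)) :=
  ((MIdx k) ×ˢ (MIdx k)).filter fun bc => (∑ j, bc.1 j) + (∑ j, bc.2 j) ≤ k

/-- Triples of multi-indices `(b, c, d)` with `|b| + |c| + |d| ≤ k`. -/
def tripIdx (k : ℕ) : Finset ((Fin 5 → ℕ) × (Fin 5 → ℕ) × (Fin 5 → ℕ)) :=
  ((MIdx k) ×ˢ (MIdx k) ×ˢ (MIdx k)).filter
    fun bcd => (∑ j, bcd.1 j) + (∑ j, bcd.2.1 j) + (∑ j, bcd.2.2 j) ≤ k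
/-! ### Basic calculus layer -/

abbrev Sm (U : Set Pt) (f : Pt → ℝ) : Prop := ContDiffOn ℝ (⊤ : ℕ∞) f U

section Basic

variable {U : Set Pt} (hU : IsOpen U) {f g : Pt → ℝ} {p : Pt}

lemma Sm.diffAt (hf : Sm U f) (hU : IsOpen U) (hp : p ∈ U) : DifferentiableAt ℝ f p :=
  (hf.differentiableOn (by simp)).differentiableAt (hU.mem_nhds hp)

lemma Sm.pd (hf : Sm U f) (hU : IsOpen U) (α : Fin 3) : Sm U (pd α f) := by
  have h1 : ContDiffOn ℝ (⊤ : ℕ∞) (fderiv ℝ f) U := hf.fderiv_of_isOpen hU (by simp)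
  exact h1.clm_apply contDiffOn_const

lemma pd_congr (hfg : ∀ q ∈ U, f q = g q) (hU : IsOpen U) (hp : p ∈ U) (α : Fin 3) :
    pd α f p = pd α g p := by
  have : f =ᶠ[nhds p] g := Filter.eventuallyEq_of_mem (hU.mem_nhds hp) hfg
  simp only [pd, this.fderiv_eq]

lemma pd_add (hf : DifferentiableAt ℝ f p) (hg : DifferentiableAt ℝ g p) (α : Fin 3) :
    pd α (fun q => f q + g q) p = pd α f p + pd α g p := by
  simp [pd, fderiv_fun_add hf hg]

lemma pd_mul (hf : DifferentiableAt ℝ f p) (hg : DifferentiableAt ℝ g p) (α : Fin 3) :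
    pd α (fun q => f q * g q) p = f p * pd α g p + pd α f p * g p := by
  simp [pd, fderiv_fun_mul hf hg]; ring

lemma pd_const_mul (hf : DifferentiableAt ℝ f p) (r : ℝ) (α : Fin 3) :
    pd α (fun q => r * f q) p = r * pd α f p := by
  simp [pd, fderiv_const_mul hf r]

lemma pd_x1 (α : Fin 3) : pd α (fun p : Pt => p.1) p = (dir3 α).1 := by
  simp [pd, fderiv_fst]

lemma pd_x2 (α : Fin 3) : pd α (fun p : Pt => p.2.1) p = (dir3 α).2.1 := by
  have : (fun p : Pt => p.2.1) = (fun q : ℝ × ℝ => q.1) ∘ (fun p : Pt => p.2) := rfl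
  rw [pd, this, fderiv_comp _ (by fun_prop) (by fun_prop)]
  simp [fderiv_fst, fderiv_snd]

lemma pd_t (α : Fin 3) : pd α (fun p : Pt => p.2.2) p = (dir3 α).2.2 := by
  have : (fun p : Pt => p.2.2) = (fun q : ℝ × ℝ => q.2) ∘ (fun p : Pt => p.2) := rfl
  rw [pd, this, fderiv_comp _ (by fun_prop) (by fun_prop)]
  simp [fderiv_snd]

/-- Clairaut. -/
lemma pd_comm (hf : Sm U f) (hU : IsOpen U) (hp : p ∈ U) (α β : Fin 3) :
    pd α (pd β f) p = pd β (pd α f) p := by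
  have hev : ∀ᶠ y in nhds p, HasFDerivAt f (fderiv ℝ f y) y := by
    filter_upwards [hU.mem_nhds hp] with q hq
    exact (hf.diffAt hU hq).hasFDerivAt
  have hd2 : DifferentiableAt ℝ (fderiv ℝ f) p :=
    ((hf.fderiv_of_isOpen hU (by simp)).differentiableOn (n := (⊤ : ℕ∞)) (by simp)).differentiableAt (hU.mem_nhds hp)
  have hsymm := second_derivative_symmetric_of_eventually hev hd2.hasFDerivAt
  have key : ∀ γ δ : Fin 3, pd γ (pd δ f) p = (fderiv ℝ (fderiv ℝ f) p (dir3 γ)) (dir3 δ) := by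
    intro γ δ
    have : pd δ f = fun q => (fderiv ℝ f q) (dir3 δ) := rfl
    rw [pd, this, fderiv_clm_apply hd2 (differentiableAt_const _)]
    simp
  rw [key, key, hsymm]

end Basic
section Gams
variable {U : Set Pt} {f g : Pt → ℝ} {p : Pt}

example : Gam 3 f = fun p => p.1 * pd 2 f p - p.2.1 * pd 1 f p := rfl
example : Gam 0 f = pd 0 f := rfl
example : Gam 4 f = fun p => p.2.2 * pd 0 f p + p.1 * pd 1 f p + p.2.1 * pd 2 f p := rfl
example (w : Pt → ℝ) : GamPow (fun _ => 0) w = w := rfl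

lemma Sm.gam (hf : Sm U f) (hU : IsOpen U) (i : Fin 5) : Sm U (Gam i f) := by
  fin_cases i
  · exact hf.pd hU 0
  · exact hf.pd hU 1
  · exact hf.pd hU 2
  · exact ((contDiff_fst.contDiffOn).mul (hf.pd hU 2)).sub
      (((contDiff_snd.fst).contDiffOn).mul (hf.pd hU 1))
  · exact ((((contDiff_snd.snd).contDiffOn).mul (hf.pd hU 0)).add
      ((contDiff_fst.contDiffOn).mul (hf.pd hU 1))).add
      (((contDiff_snd.fst).contDiffOn).mul (hf.pd hU 2))

lemma Sm.gamPow (hf : Sm U f) (hU : IsOpen U) (a : Fin 5 → ℕ) : Sm U (GamPow a f) := by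
  have iter : ∀ (i : Fin 5) (n : ℕ) (g : Pt → ℝ), Sm U g → Sm U ((Gam i)^[n] g) := by
    intro i n
    induction n with
    | zero => intro g hg; simpa using hg
    | succ m ih => intro g hg; rw [Function.iterate_succ_apply]; exact ih _ (hg.gam hU i)
  exact iter 0 _ _ (iter 1 _ _ (iter 2 _ _ (iter 3 _ _ (iter 4 _ _ hf))))

lemma gam_congr (hU : IsOpen U) (hp : p ∈ U) (hfg : ∀ q ∈ U, f q = g q) (i : Fin 5) :
    Gam i f p = Gam i g p := by
  fin_cases i <;>
    simp only [Gam, pd_congr hfg hU hp]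

lemma gam_add (hf : DifferentiableAt ℝ f p) (hg : DifferentiableAt ℝ g p) (i : Fin 5) :
    Gam i (fun q => f q + g q) p = Gam i f p + Gam i g p := by
  fin_cases i <;> simp only [Gam, pd_add hf hg] <;> ring

lemma gam_const_mul (hf : DifferentiableAt ℝ f p) (r : ℝ) (i : Fin 5) :
    Gam i (fun q => r * f q) p = r * Gam i f p := by
  fin_cases i <;> simp only [Gam, pd_const_mul hf] <;> ring

end Gams
section Comm
variable {U : Set Pt} {f : Pt → ℝ} {p : Pt}

lemma gam0_def (f : Pt → ℝ) : Gam 0 f = pd 0 f := rfl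
lemma gam1_def (f : Pt → ℝ) : Gam 1 f = pd 1 f := rfl
lemma gam2_def (f : Pt → ℝ) : Gam 2 f = pd 2 f := rfl
lemma gam3_def (f : Pt → ℝ) (p : Pt) :
    Gam 3 f p = p.1 * pd 2 f p - p.2.1 * pd 1 f p := rfl
lemma gam4_def (f : Pt → ℝ) (p : Pt) :
    Gam 4 f p = p.2.2 * pd 0 f p + p.1 * pd 1 f p + p.2.1 * pd 2 f p := rfl

lemma pd_gam3 (hf : Sm U f) (hU : IsOpen U) (hp : p ∈ U) (α : Fin 3) :
    pd α (Gam 3 f) p = Gam 3 (pd α f) p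
      + (dir3 α).1 * pd 2 f p - (dir3 α).2.1 * pd 1 f p := by
  have h2 : DifferentiableAt ℝ (pd 2 f) p := (hf.pd hU 2).diffAt hU hp
  have h1 : DifferentiableAt ℝ (pd 1 f) p := (hf.pd hU 1).diffAt hU hp
  have e : Gam 3 f = fun q => q.1 * pd 2 f q + (-q.2.1) * pd 1 f q := by
    funext q; rw [gam3_def]; ring
  rw [e, pd_add (by fun_prop) (by fun_prop),
    pd_mul (by fun_prop) h2, pd_mul (by fun_prop) h1]
  have hx1 := pd_x1 (p := p) α
  have hx2 : pd α (fun q : Pt => -q.2.1) p = -(dir3 α).2.1 := by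
    have : (fun q : Pt => -q.2.1) = (fun q => (-1 : ℝ) * q.2.1) := by funext q; ring
    rw [this, pd_const_mul (by fun_prop), pd_x2]; ring
  rw [hx1, hx2, pd_comm hf hU hp α 2, pd_comm hf hU hp α 1, gam3_def]
  ring

lemma pd_gam4 (hf : Sm U f) (hU : IsOpen U) (hp : p ∈ U) (α : Fin 3) :
    pd α (Gam 4 f) p = Gam 4 (pd α f) p + pd α f p := by
  have h0 : DifferentiableAt ℝ (pd 0 f) p := (hf.pd hU 0).diffAt hU hp
  have h1 : DifferentiableAt ℝ (pd 1 f) p := (hf.pd hU 1).diffAt hU hp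
  have h2 : DifferentiableAt ℝ (pd 2 f) p := (hf.pd hU 2).diffAt hU hp
  have e : Gam 4 f = fun q => (q.2.2 * pd 0 f q + q.1 * pd 1 f q) + q.2.1 * pd 2 f q := rfl
  rw [e, pd_add (by fun_prop) (by fun_prop), pd_add (by fun_prop) (by fun_prop),
    pd_mul (by fun_prop) h0, pd_mul (by fun_prop) h1, pd_mul (by fun_prop) h2,
    pd_t, pd_x1, pd_x2,
    pd_comm hf hU hp α 0, pd_comm hf hU hp α 1, pd_comm hf hU hp α 2, gam4_def]
  have hdir : (dir3 α).2.2 * pd 0 f p + (dir3 α).1 * pd 1 f p + (dir3 α).2.1 * pd 2 f p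
      = pd α f p := by
    fin_cases α <;> simp [dir3]
  linarith [hdir]

lemma gam43 (hf : Sm U f) (hU : IsOpen U) (hp : p ∈ U) :
    Gam 4 (Gam 3 f) p = Gam 3 (Gam 4 f) p := by
  rw [gam4_def, gam3_def, pd_gam3 hf hU hp 0, pd_gam3 hf hU hp 1, pd_gam3 hf hU hp 2,
    pd_gam4 hf hU hp 1, pd_gam4 hf hU hp 2]
  simp only [gam3_def, gam4_def, dir3]
  rw [pd_comm hf hU hp 2 0, pd_comm hf hU hp 1 0, pd_comm hf hU hp 2 1]
  ring

end Comm
section GamGam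
variable {U : Set Pt} {f : Pt → ℝ} {p : Pt}

lemma g10 (hf : Sm U f) (hU : IsOpen U) (hp : p ∈ U) :
    Gam 1 (Gam 0 f) p = Gam 0 (Gam 1 f) p := pd_comm hf hU hp 1 0
lemma g20 (hf : Sm U f) (hU : IsOpen U) (hp : p ∈ U) :
    Gam 2 (Gam 0 f) p = Gam 0 (Gam 2 f) p := pd_comm hf hU hp 2 0
lemma g21 (hf : Sm U f) (hU : IsOpen U) (hp : p ∈ U) :
    Gam 2 (Gam 1 f) p = Gam 1 (Gam 2 f) p := pd_comm hf hU hp 2 1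
lemma g30 (hf : Sm U f) (hU : IsOpen U) (hp : p ∈ U) :
    Gam 3 (Gam 0 f) p = Gam 0 (Gam 3 f) p := by
  have := pd_gam3 hf hU hp 0; simp [dir3] at this; rw [gam0_def, gam0_def, this]
lemma g31 (hf : Sm U f) (hU : IsOpen U) (hp : p ∈ U) :
    Gam 3 (Gam 1 f) p = Gam 1 (Gam 3 f) p - Gam 2 f p := by
  have := pd_gam3 hf hU hp 1; simp [dir3] at this
  rw [gam1_def, gam1_def, gam2_def, this]; ring
lemma g32 (hf : Sm U f) (hU : IsOpen U) (hp : p ∈ U) :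
    Gam 3 (Gam 2 f) p = Gam 2 (Gam 3 f) p + Gam 1 f p := by
  have := pd_gam3 hf hU hp 2; simp [dir3] at this
  rw [gam2_def, gam2_def, gam1_def, this]; ring
lemma g40 (hf : Sm U f) (hU : IsOpen U) (hp : p ∈ U) :
    Gam 4 (Gam 0 f) p = Gam 0 (Gam 4 f) p - Gam 0 f p := by
  have := pd_gam4 hf hU hp 0
  show Gam 4 (pd 0 f) p = pd 0 (Gam 4 f) p - pd 0 f p
  linarith [this]
lemma g41 (hf : Sm U f) (hU : IsOpen U) (hp : p ∈ U) :
    Gam 4 (Gam 1 f) p = Gam 1 (Gam 4 f) p - Gam 1 f p := by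
  have := pd_gam4 hf hU hp 1
  show Gam 4 (pd 1 f) p = pd 1 (Gam 4 f) p - pd 1 f p
  linarith [this]
lemma g42 (hf : Sm U f) (hU : IsOpen U) (hp : p ∈ U) :
    Gam 4 (Gam 2 f) p = Gam 2 (Gam 4 f) p - Gam 2 f p := by
  have := pd_gam4 hf hU hp 2
  show Gam 4 (pd 2 f) p = pd 2 (Gam 4 f) p - pd 2 f p
  linarith [this]

end GamGam

/-! ### scalar list representations -/

def ee (i : Fin 5) : Fin 5 → ℕ := fun j => if j = i then 1 else 0

lemma sum_ee (i : Fin 5) (c : Fin 5 → ℕ) : (∑ j, (c + ee i) j) = (∑ j, c j) + 1 := by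
  simp [ee, Finset.sum_add_distrib]

def evalL (L : List (ℝ × (Fin 5 → ℕ))) (w : Pt → ℝ) (p : Pt) : ℝ :=
  (L.map fun t => t.1 * GamPow t.2 w p).sum

def scaleL (r : ℝ) (L : List (ℝ × (Fin 5 → ℕ))) : List (ℝ × (Fin 5 → ℕ)) :=
  L.map fun t => (r * t.1, t.2)

section Lists
variable {U : Set Pt} {w : Pt → ℝ} {p : Pt}

lemma evalL_nil : evalL [] w p = 0 := rfl
lemma evalL_cons (t : ℝ × (Fin 5 → ℕ)) (L : List (ℝ × (Fin 5 → ℕ))) :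
    evalL (t :: L) w p = t.1 * GamPow t.2 w p + evalL L w p := rfl
lemma evalL_append (L₁ L₂ : List (ℝ × (Fin 5 → ℕ))) :
    evalL (L₁ ++ L₂) w p = evalL L₁ w p + evalL L₂ w p := by
  simp [evalL]
lemma evalL_scale (r : ℝ) (L : List (ℝ × (Fin 5 → ℕ))) :
    evalL (scaleL r L) w p = r * evalL L w p := by
  induction L with
  | nil => simp [evalL, scaleL]
  | cons t L ih => simp only [scaleL, List.map_cons, evalL_cons] at *; rw [ih]; ring

lemma scaleL_mem {r : ℝ} {L : List (ℝ × (Fin 5 → ℕ))} {t} (ht : t ∈ scaleL r L) :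
    ∃ s ∈ L, t.2 = s.2 := by
  simp only [scaleL, List.mem_map] at ht
  obtain ⟨s, hs, rfl⟩ := ht
  exact ⟨s, hs, rfl⟩

lemma Sm.evalL (hw : Sm U w) (hU : IsOpen U) (L : List (ℝ × (Fin 5 → ℕ))) :
    Sm U (fun p => evalL L w p) := by
  induction L with
  | nil => exact (show Sm U (fun _ => (0:ℝ)) from contDiffOn_const)
  | cons t L ih =>
    simp only [evalL_cons]
    exact (contDiffOn_const.mul (hw.gamPow hU t.2)).add ih

lemma gam_evalL (hw : Sm U w) (hU : IsOpen U) (hp : p ∈ U) (i : Fin 5)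
    (L : List (ℝ × (Fin 5 → ℕ))) :
    Gam i (fun q => evalL L w q) p = (L.map fun t => t.1 * Gam i (GamPow t.2 w) p).sum := by
  induction L with
  | nil =>
    simp only [evalL, List.map_nil, List.sum_nil]
    have : (fun _ : Pt => (0:ℝ)) = (fun q => (0:ℝ) * w q) := by funext; ring
    calc Gam i (fun _ => (0:ℝ)) p = (0:ℝ) * Gam i w p := by
          rw [this, gam_const_mul (hw.diffAt hU hp)]
      _ = 0 := by ring
  | cons t L ih =>
    have h1 : DifferentiableAt ℝ (fun q => t.1 * GamPow t.2 w q) p :=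
      (Sm.diffAt (contDiffOn_const.mul (hw.gamPow hU t.2)) hU hp)
    have h2 : DifferentiableAt ℝ (fun q => evalL L w q) p :=
      (Sm.diffAt (hw.evalL hU L) hU hp)
    calc Gam i (fun q => evalL (t :: L) w q) p
        = Gam i (fun q => (fun q => t.1 * GamPow t.2 w q) q + (fun q => evalL L w q) q) p := rfl
      _ = Gam i (fun q => t.1 * GamPow t.2 w q) p + Gam i (fun q => evalL L w q) p :=
          gam_add h1 h2 i
      _ = t.1 * Gam i (GamPow t.2 w) p + (L.map fun t => t.1 * Gam i (GamPow t.2 w) p).sum := by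
          rw [gam_const_mul ((hw.gamPow hU t.2).diffAt hU hp), ih]
      _ = _ := by simp

end Lists

/-! ### prepend lemmas -/

lemma prep0 (c : Fin 5 → ℕ) (w : Pt → ℝ) : Gam 0 (GamPow c w) = GamPow (c + ee 0) w := by
  have h0 : (c + ee 0) 0 = c 0 + 1 := by simp [ee]
  have h1 : (c + ee 0) 1 = c 1 := by simp [ee]
  have h2 : (c + ee 0) 2 = c 2 := by simp [ee]
  have h3 : (c + ee 0) 3 = c 3 := by simp [ee]
  have h4 : (c + ee 0) 4 = c 4 := by simp [ee]
  simp [GamPow, h0, h1, h2, h3, h4, Function.iterate_succ_apply']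

lemma prep1 (c : Fin 5 → ℕ) (hc : c 0 = 0) (w : Pt → ℝ) :
    Gam 1 (GamPow c w) = GamPow (c + ee 1) w := by
  have h0 : (c + ee 1) 0 = 0 := by simp [ee, hc]
  have h1 : (c + ee 1) 1 = c 1 + 1 := by simp [ee]
  have h2 : (c + ee 1) 2 = c 2 := by simp [ee]
  have h3 : (c + ee 1) 3 = c 3 := by simp [ee]
  have h4 : (c + ee 1) 4 = c 4 := by simp [ee]
  simp [GamPow, h0, h1, h2, h3, h4, hc, Function.iterate_succ_apply']

lemma prep2 (c : Fin 5 → ℕ) (hc0 : c 0 = 0) (hc1 : c 1 = 0) (w : Pt → ℝ) :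
    Gam 2 (GamPow c w) = GamPow (c + ee 2) w := by
  have h0 : (c + ee 2) 0 = 0 := by simp [ee, hc0]
  have h1 : (c + ee 2) 1 = 0 := by simp [ee, hc1]
  have h2 : (c + ee 2) 2 = c 2 + 1 := by simp [ee]
  have h3 : (c + ee 2) 3 = c 3 := by simp [ee]
  have h4 : (c + ee 2) 4 = c 4 := by simp [ee]
  simp [GamPow, h0, h1, h2, h3, h4, hc0, hc1, Function.iterate_succ_apply']

lemma prep3 (c : Fin 5 → ℕ) (hc0 : c 0 = 0) (hc1 : c 1 = 0) (hc2 : c 2 = 0) (w : Pt → ℝ) :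
    Gam 3 (GamPow c w) = GamPow (c + ee 3) w := by
  have h0 : (c + ee 3) 0 = 0 := by simp [ee, hc0]
  have h1 : (c + ee 3) 1 = 0 := by simp [ee, hc1]
  have h2 : (c + ee 3) 2 = 0 := by simp [ee, hc2]
  have h3 : (c + ee 3) 3 = c 3 + 1 := by simp [ee]
  have h4 : (c + ee 3) 4 = c 4 := by simp [ee]
  simp [GamPow, h0, h1, h2, h3, h4, hc0, hc1, hc2, Function.iterate_succ_apply']

lemma prep4 (c : Fin 5 → ℕ) (hc0 : c 0 = 0) (hc1 : c 1 = 0) (hc2 : c 2 = 0) (hc3 : c 3 = 0)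
    (w : Pt → ℝ) : Gam 4 (GamPow c w) = GamPow (c + ee 4) w := by
  have h3 : (c + ee 4) 3 = 0 := by simp [ee, hc3]
  have h4 : (c + ee 4) 4 = c 4 + 1 := by simp [ee]
  have h0 : (c + ee 4) 0 = 0 := by simp [ee, hc0]
  have h1 : (c + ee 4) 1 = 0 := by simp [ee, hc1]
  have h2 : (c + ee 4) 2 = 0 := by simp [ee, hc2]
  simp [GamPow, h0, h1, h2, h3, h4, hc0, hc1, hc2, hc3, Function.iterate_succ_apply']
def PRspec (i : Fin 5) (c : Fin 5 → ℕ) (L : List (ℝ × (Fin 5 → ℕ))) : Prop :=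
  (∀ t ∈ L, (∑ j, t.2 j) ≤ (∑ j, c j) + 1) ∧
  ∀ (U : Set Pt), IsOpen U → ∀ w, Sm U w → ∀ p ∈ U, Gam i (GamPow c w) p = evalL L w p

lemma decomp (c : Fin 5 → ℕ) (j : Fin 5) (h : c j ≠ 0) :
    c = Function.update c j (c j - 1) + ee j := by
  funext l
  by_cases hl : l = j
  · subst hl; simp [ee, Function.update_self]; omega
  · simp [ee, hl, Function.update_of_ne hl]

lemma evalL_prepend (j : Fin 5) (hPRj : ∀ c, ∃ L, PRspec j c L)
    (N : ℕ) (L' : List (ℝ × (Fin 5 → ℕ))) (hL' : ∀ t ∈ L', (∑ i, t.2 i) ≤ N) :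
    ∃ L, (∀ t ∈ L, (∑ i, t.2 i) ≤ N + 1) ∧
      ∀ (U : Set Pt), IsOpen U → ∀ w, Sm U w → ∀ p ∈ U,
        (L'.map fun t => t.1 * Gam j (GamPow t.2 w) p).sum = evalL L w p := by
  induction L' with
  | nil => exact ⟨[], by simp, by intros; simp [evalL]⟩
  | cons t rest ih =>
    obtain ⟨Lr, hr1, hr2⟩ := ih (fun s hs => hL' s (List.mem_cons_of_mem _ hs))
    obtain ⟨Lh, hh1, hh2⟩ := hPRj t.2
    refine ⟨scaleL t.1 Lh ++ Lr, ?_, ?_⟩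
    · intro s hs
      rcases List.mem_append.1 hs with hs | hs
      · obtain ⟨s', hs', he⟩ := scaleL_mem hs
        rw [he]
        exact le_trans (hh1 s' hs') (by
          have := hL' t (List.mem_cons_self); omega)
      · exact hr1 s hs
    · intro U hU w hw p hp
      rw [List.map_cons, List.sum_cons, evalL_append, evalL_scale,
        ← hh2 U hU w hw p hp, ← hr2 U hU w hw p hp]

lemma PR0 (c : Fin 5 → ℕ) : ∃ L, PRspec 0 c L := by
  refine ⟨[(1, c + ee 0)], ?_, ?_⟩
  · intro t ht; simp at ht; rw [ht, sum_ee]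
  · intro U hU w hw p hp
    simp [evalL, ← prep0 c w]

lemma PR1 (c : Fin 5 → ℕ) : ∃ L, PRspec 1 c L := by
  suffices H : ∀ n (c : Fin 5 → ℕ), c 0 = n → ∃ L, PRspec 1 c L from H (c 0) c rfl
  intro n
  induction n with
  | zero =>
    intro c hc
    refine ⟨[(1, c + ee 1)], ?_, ?_⟩
    · intro t ht; simp at ht; rw [ht, sum_ee]
    · intro U hU w hw p hp; simp [evalL, ← prep1 c hc w]
  | succ n ih =>
    intro c hc
    set c' := Function.update c 0 (c 0 - 1) with hc'def
    have hdec : c = c' + ee 0 := decomp c 0 (by omega)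
    obtain ⟨L', hL'1, hL'2⟩ := ih c' (by simp [hc'def, Function.update_self]; omega)
    have hsum : (∑ j, c' j) + 1 = ∑ j, c j := by rw [hdec, sum_ee]
    obtain ⟨L, hL1, hL2⟩ := evalL_prepend 0 PR0 ((∑ j, c' j) + 1) L' hL'1
    refine ⟨L, ?_, ?_⟩
    · intro t ht; have := hL1 t ht; omega
    · intro U hU w hw p hp
      have hg : Sm U (GamPow c' w) := hw.gamPow hU c'
      calc Gam 1 (GamPow c w) p = Gam 1 (Gam 0 (GamPow c' w)) p := by
            rw [hdec, ← prep0]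
        _ = Gam 0 (Gam 1 (GamPow c' w)) p := g10 hg hU hp
        _ = Gam 0 (fun q => evalL L' w q) p :=
            gam_congr hU hp (fun q hq => hL'2 U hU w hw q hq) 0
        _ = (L'.map fun t => t.1 * Gam 0 (GamPow t.2 w) p).sum := gam_evalL hw hU hp 0 L'
        _ = evalL L w p := hL2 U hU w hw p hp
lemma PR2 (c : Fin 5 → ℕ) : ∃ L, PRspec 2 c L := by
  suffices H : ∀ N (c : Fin 5 → ℕ), c 0 + c 1 = N → ∃ L, PRspec 2 c L from H _ c rfl
  intro N
  induction N using Nat.strong_induction_on with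
  | _ N ih =>
  intro c hN
  by_cases h0 : c 0 = 0
  · by_cases h1 : c 1 = 0
    · refine ⟨[(1, c + ee 2)], ?_, ?_⟩
      · intro t ht; simp at ht; rw [ht, sum_ee]
      · intro U hU w hw p hp; simp [evalL, ← prep2 c h0 h1 w]
    · set c' := Function.update c 1 (c 1 - 1) with hc'
      have hdec : c = c' + ee 1 := decomp c 1 h1
      have e1 : c' 1 = c 1 - 1 := Function.update_self 1 (c 1 - 1) c
      have h'0 : c' 0 = 0 := by
        rw [hc', Function.update_of_ne (by decide) _ _]; exact h0
      obtain ⟨L', hL'1, hL'2⟩ := ih (c' 0 + c' 1) (by rw [h'0]; omega) c' rfl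
      have hsum : (∑ j, c' j) + 1 = ∑ j, c j := by rw [hdec, sum_ee]
      obtain ⟨L, hL1, hL2⟩ := evalL_prepend 1 PR1 ((∑ j, c' j) + 1) L' hL'1
      refine ⟨L, fun t ht => by have := hL1 t ht; omega, ?_⟩
      intro U hU w hw p hp
      have hg : Sm U (GamPow c' w) := hw.gamPow hU c'
      calc Gam 2 (GamPow c w) p = Gam 2 (Gam 1 (GamPow c' w)) p := by
            rw [hdec, ← prep1 c' h'0 w]
        _ = Gam 1 (Gam 2 (GamPow c' w)) p := g21 hg hU hp
        _ = Gam 1 (fun q => evalL L' w q) p :=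
            gam_congr hU hp (fun q hq => hL'2 U hU w hw q hq) 1
        _ = _ := gam_evalL hw hU hp 1 L'
        _ = evalL L w p := hL2 U hU w hw p hp
  · set c' := Function.update c 0 (c 0 - 1) with hc'
    have hdec : c = c' + ee 0 := decomp c 0 h0
    have e0 : c' 0 = c 0 - 1 := Function.update_self 0 (c 0 - 1) c
    have e1 : c' 1 = c 1 := by rw [hc', Function.update_of_ne (by decide) _ _]
    obtain ⟨L', hL'1, hL'2⟩ := ih (c' 0 + c' 1) (by omega) c' rfl
    have hsum : (∑ j, c' j) + 1 = ∑ j, c j := by rw [hdec, sum_ee]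
    obtain ⟨L, hL1, hL2⟩ := evalL_prepend 0 PR0 ((∑ j, c' j) + 1) L' hL'1
    refine ⟨L, fun t ht => by have := hL1 t ht; omega, ?_⟩
    intro U hU w hw p hp
    have hg : Sm U (GamPow c' w) := hw.gamPow hU c'
    calc Gam 2 (GamPow c w) p = Gam 2 (Gam 0 (GamPow c' w)) p := by rw [hdec, ← prep0]
      _ = Gam 0 (Gam 2 (GamPow c' w)) p := g20 hg hU hp
      _ = Gam 0 (fun q => evalL L' w q) p :=
          gam_congr hU hp (fun q hq => hL'2 U hU w hw q hq) 0
      _ = _ := gam_evalL hw hU hp 0 L'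
      _ = evalL L w p := hL2 U hU w hw p hp
lemma PR3 (c : Fin 5 → ℕ) : ∃ L, PRspec 3 c L := by
  suffices H : ∀ N (c : Fin 5 → ℕ), c 0 + c 1 + c 2 = N → ∃ L, PRspec 3 c L from H _ c rfl
  intro N
  induction N using Nat.strong_induction_on with
  | _ N ih =>
  intro c hN
  by_cases h0 : c 0 = 0
  · by_cases h1 : c 1 = 0
    · by_cases h2 : c 2 = 0
      · refine ⟨[(1, c + ee 3)], ?_, ?_⟩
        · intro t ht; simp at ht; rw [ht, sum_ee]
        · intro U hU w hw p hp; simp [evalL, ← prep3 c h0 h1 h2 w]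
      · -- peel Gam 2 : Gam3 (Gam2 g) = Gam2 (Gam3 g) + Gam1 g
        set c' := Function.update c 2 (c 2 - 1) with hc'
        have hdec : c = c' + ee 2 := decomp c 2 h2
        have e2 : c' 2 = c 2 - 1 := Function.update_self 2 (c 2 - 1) c
        have h'0 : c' 0 = 0 := by rw [hc', Function.update_of_ne (by decide) _ _]; exact h0
        have h'1 : c' 1 = 0 := by rw [hc', Function.update_of_ne (by decide) _ _]; exact h1
        obtain ⟨L', hL'1, hL'2⟩ := ih (c' 0 + c' 1 + c' 2) (by rw [h'0, h'1]; omega) c' rfl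
        have hsum : (∑ j, c' j) + 1 = ∑ j, c j := by rw [hdec, sum_ee]
        obtain ⟨L₁, hL11, hL12⟩ := evalL_prepend 2 PR2 ((∑ j, c' j) + 1) L' hL'1
        obtain ⟨L₂, hL21, hL22⟩ := PR1 c'
        refine ⟨L₁ ++ L₂, ?_, ?_⟩
        · intro t ht
          rcases List.mem_append.1 ht with ht | ht
          · have := hL11 t ht; omega
          · have := hL21 t ht; omega
        · intro U hU w hw p hp
          have hg : Sm U (GamPow c' w) := hw.gamPow hU c'
          rw [evalL_append]
          calc Gam 3 (GamPow c w) p = Gam 3 (Gam 2 (GamPow c' w)) p := by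
                rw [hdec, ← prep2 c' h'0 h'1 w]
            _ = Gam 2 (Gam 3 (GamPow c' w)) p + Gam 1 (GamPow c' w) p := g32 hg hU hp
            _ = Gam 2 (fun q => evalL L' w q) p + evalL L₂ w p := by
                rw [gam_congr hU hp (fun q hq => hL'2 U hU w hw q hq) 2,
                  hL22 U hU w hw p hp]
            _ = _ := by rw [gam_evalL hw hU hp 2 L', hL12 U hU w hw p hp]
    · -- peel Gam 1 : Gam3 (Gam1 g) = Gam1 (Gam3 g) - Gam2 g
      set c' := Function.update c 1 (c 1 - 1) with hc'
      have hdec : c = c' + ee 1 := decomp c 1 h1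
      have e1 : c' 1 = c 1 - 1 := Function.update_self 1 (c 1 - 1) c
      have h'0 : c' 0 = 0 := by rw [hc', Function.update_of_ne (by decide) _ _]; exact h0
      have e2 : c' 2 = c 2 := by rw [hc', Function.update_of_ne (by decide) _ _]
      obtain ⟨L', hL'1, hL'2⟩ := ih (c' 0 + c' 1 + c' 2) (by rw [h'0]; omega) c' rfl
      have hsum : (∑ j, c' j) + 1 = ∑ j, c j := by rw [hdec, sum_ee]
      obtain ⟨L₁, hL11, hL12⟩ := evalL_prepend 1 PR1 ((∑ j, c' j) + 1) L' hL'1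
      obtain ⟨L₂, hL21, hL22⟩ := PR2 c'
      refine ⟨L₁ ++ scaleL (-1) L₂, ?_, ?_⟩
      · intro t ht
        rcases List.mem_append.1 ht with ht | ht
        · have := hL11 t ht; omega
        · obtain ⟨s, hs, he⟩ := scaleL_mem ht
          have := hL21 s hs; rw [he]; omega
      · intro U hU w hw p hp
        have hg : Sm U (GamPow c' w) := hw.gamPow hU c'
        rw [evalL_append, evalL_scale]
        calc Gam 3 (GamPow c w) p = Gam 3 (Gam 1 (GamPow c' w)) p := by
              rw [hdec, ← prep1 c' h'0 w]
          _ = Gam 1 (Gam 3 (GamPow c' w)) p - Gam 2 (GamPow c' w) p := g31 hg hU hp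
          _ = Gam 1 (fun q => evalL L' w q) p + (-1) * evalL L₂ w p := by
              rw [gam_congr hU hp (fun q hq => hL'2 U hU w hw q hq) 1,
                hL22 U hU w hw p hp]; ring
          _ = _ := by rw [gam_evalL hw hU hp 1 L', hL12 U hU w hw p hp]
  · -- peel Gam 0 : Gam3 (Gam0 g) = Gam0 (Gam3 g)
    set c' := Function.update c 0 (c 0 - 1) with hc'
    have hdec : c = c' + ee 0 := decomp c 0 h0
    have e0 : c' 0 = c 0 - 1 := Function.update_self 0 (c 0 - 1) c
    have e1 : c' 1 = c 1 := by rw [hc', Function.update_of_ne (by decide) _ _]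
    have e2 : c' 2 = c 2 := by rw [hc', Function.update_of_ne (by decide) _ _]
    obtain ⟨L', hL'1, hL'2⟩ := ih (c' 0 + c' 1 + c' 2) (by omega) c' rfl
    have hsum : (∑ j, c' j) + 1 = ∑ j, c j := by rw [hdec, sum_ee]
    obtain ⟨L, hL1, hL2⟩ := evalL_prepend 0 PR0 ((∑ j, c' j) + 1) L' hL'1
    refine ⟨L, fun t ht => by have := hL1 t ht; omega, ?_⟩
    intro U hU w hw p hp
    have hg : Sm U (GamPow c' w) := hw.gamPow hU c'
    calc Gam 3 (GamPow c w) p = Gam 3 (Gam 0 (GamPow c' w)) p := by rw [hdec, ← prep0]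
      _ = Gam 0 (Gam 3 (GamPow c' w)) p := g30 hg hU hp
      _ = Gam 0 (fun q => evalL L' w q) p :=
          gam_congr hU hp (fun q hq => hL'2 U hU w hw q hq) 0
      _ = _ := gam_evalL hw hU hp 0 L'
      _ = evalL L w p := hL2 U hU w hw p hp

lemma PR4 (c : Fin 5 → ℕ) : ∃ L, PRspec 4 c L := by
  suffices H : ∀ N (c : Fin 5 → ℕ), c 0 + c 1 + c 2 + c 3 = N → ∃ L, PRspec 4 c L from
    H _ c rfl
  intro N
  induction N using Nat.strong_induction_on with
  | _ N ih =>
  intro c hN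
  by_cases h0 : c 0 = 0
  · by_cases h1 : c 1 = 0
    · by_cases h2 : c 2 = 0
      · by_cases h3 : c 3 = 0
        · refine ⟨[(1, c + ee 4)], ?_, ?_⟩
          · intro t ht; simp at ht; rw [ht, sum_ee]
          · intro U hU w hw p hp; simp [evalL, ← prep4 c h0 h1 h2 h3 w]
        · -- peel Gam 3 : Gam4 (Gam3 g) = Gam3 (Gam4 g)
          set c' := Function.update c 3 (c 3 - 1) with hc'
          have hdec : c = c' + ee 3 := decomp c 3 h3
          have e3 : c' 3 = c 3 - 1 := Function.update_self 3 (c 3 - 1) c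
          have h'0 : c' 0 = 0 := by rw [hc', Function.update_of_ne (by decide) _ _]; exact h0
          have h'1 : c' 1 = 0 := by rw [hc', Function.update_of_ne (by decide) _ _]; exact h1
          have h'2 : c' 2 = 0 := by rw [hc', Function.update_of_ne (by decide) _ _]; exact h2
          obtain ⟨L', hL'1, hL'2⟩ := ih (c' 0 + c' 1 + c' 2 + c' 3)
            (by rw [h'0, h'1, h'2]; omega) c' rfl
          have hsum : (∑ j, c' j) + 1 = ∑ j, c j := by rw [hdec, sum_ee]
          obtain ⟨L, hL1, hL2⟩ := evalL_prepend 3 PR3 ((∑ j, c' j) + 1) L' hL'1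
          refine ⟨L, fun t ht => by have := hL1 t ht; omega, ?_⟩
          intro U hU w hw p hp
          have hg : Sm U (GamPow c' w) := hw.gamPow hU c'
          calc Gam 4 (GamPow c w) p = Gam 4 (Gam 3 (GamPow c' w)) p := by
                rw [hdec, ← prep3 c' h'0 h'1 h'2 w]
            _ = Gam 3 (Gam 4 (GamPow c' w)) p := gam43 hg hU hp
            _ = Gam 3 (fun q => evalL L' w q) p :=
                gam_congr hU hp (fun q hq => hL'2 U hU w hw q hq) 3
            _ = _ := gam_evalL hw hU hp 3 L'
            _ = evalL L w p := hL2 U hU w hw p hp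
      · -- peel Gam 2 : Gam4 (Gam2 g) = Gam2 (Gam4 g) - Gam2 g = ... - GamPow c w
        set c' := Function.update c 2 (c 2 - 1) with hc'
        have hdec : c = c' + ee 2 := decomp c 2 h2
        have e2 : c' 2 = c 2 - 1 := Function.update_self 2 (c 2 - 1) c
        have h'0 : c' 0 = 0 := by rw [hc', Function.update_of_ne (by decide) _ _]; exact h0
        have h'1 : c' 1 = 0 := by rw [hc', Function.update_of_ne (by decide) _ _]; exact h1
        have e3 : c' 3 = c 3 := by rw [hc', Function.update_of_ne (by decide) _ _]
        obtain ⟨L', hL'1, hL'2⟩ := ih (c' 0 + c' 1 + c' 2 + c' 3)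
          (by rw [h'0, h'1]; omega) c' rfl
        have hsum : (∑ j, c' j) + 1 = ∑ j, c j := by rw [hdec, sum_ee]
        obtain ⟨L₁, hL11, hL12⟩ := evalL_prepend 2 PR2 ((∑ j, c' j) + 1) L' hL'1
        refine ⟨L₁ ++ [(-1, c)], ?_, ?_⟩
        · intro t ht
          rcases List.mem_append.1 ht with ht | ht
          · have := hL11 t ht; omega
          · simp at ht; subst ht
            show (∑ j, c j) ≤ _; omega
        · intro U hU w hw p hp
          have hg : Sm U (GamPow c' w) := hw.gamPow hU c'
          rw [evalL_append]
          calc Gam 4 (GamPow c w) p = Gam 4 (Gam 2 (GamPow c' w)) p := by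
                rw [hdec, ← prep2 c' h'0 h'1 w]
            _ = Gam 2 (Gam 4 (GamPow c' w)) p - Gam 2 (GamPow c' w) p := g42 hg hU hp
            _ = Gam 2 (fun q => evalL L' w q) p + evalL [((-1 : ℝ), c)] w p := by
                rw [gam_congr hU hp (fun q hq => hL'2 U hU w hw q hq) 2,
                  prep2 c' h'0 h'1 w, ← hdec]
                have hev : evalL [((-1:ℝ), c)] w p = -GamPow c w p := by simp [evalL]
                rw [hev]; ring
            _ = _ := by rw [gam_evalL hw hU hp 2 L', hL12 U hU w hw p hp]
    · -- peel Gam 1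
      set c' := Function.update c 1 (c 1 - 1) with hc'
      have hdec : c = c' + ee 1 := decomp c 1 h1
      have e1 : c' 1 = c 1 - 1 := Function.update_self 1 (c 1 - 1) c
      have h'0 : c' 0 = 0 := by rw [hc', Function.update_of_ne (by decide) _ _]; exact h0
      have e2 : c' 2 = c 2 := by rw [hc', Function.update_of_ne (by decide) _ _]
      have e3 : c' 3 = c 3 := by rw [hc', Function.update_of_ne (by decide) _ _]
      obtain ⟨L', hL'1, hL'2⟩ := ih (c' 0 + c' 1 + c' 2 + c' 3) (by rw [h'0]; omega) c' rfl
      have hsum : (∑ j, c' j) + 1 = ∑ j, c j := by rw [hdec, sum_ee]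
      obtain ⟨L₁, hL11, hL12⟩ := evalL_prepend 1 PR1 ((∑ j, c' j) + 1) L' hL'1
      refine ⟨L₁ ++ [(-1, c)], ?_, ?_⟩
      · intro t ht
        rcases List.mem_append.1 ht with ht | ht
        · have := hL11 t ht; omega
        · simp at ht; subst ht
          show (∑ j, c j) ≤ _; omega
      · intro U hU w hw p hp
        have hg : Sm U (GamPow c' w) := hw.gamPow hU c'
        rw [evalL_append]
        calc Gam 4 (GamPow c w) p = Gam 4 (Gam 1 (GamPow c' w)) p := by
              rw [hdec, ← prep1 c' h'0 w]
          _ = Gam 1 (Gam 4 (GamPow c' w)) p - Gam 1 (GamPow c' w) p := g41 hg hU hp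
          _ = Gam 1 (fun q => evalL L' w q) p + evalL [((-1 : ℝ), c)] w p := by
              rw [gam_congr hU hp (fun q hq => hL'2 U hU w hw q hq) 1,
                prep1 c' h'0 w, ← hdec]
              have hev : evalL [((-1:ℝ), c)] w p = -GamPow c w p := by simp [evalL]
              rw [hev]; ring
          _ = _ := by rw [gam_evalL hw hU hp 1 L', hL12 U hU w hw p hp]
  · -- peel Gam 0
    set c' := Function.update c 0 (c 0 - 1) with hc'
    have hdec : c = c' + ee 0 := decomp c 0 h0
    have e0 : c' 0 = c 0 - 1 := Function.update_self 0 (c 0 - 1) c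
    have e1 : c' 1 = c 1 := by rw [hc', Function.update_of_ne (by decide) _ _]
    have e2 : c' 2 = c 2 := by rw [hc', Function.update_of_ne (by decide) _ _]
    have e3 : c' 3 = c 3 := by rw [hc', Function.update_of_ne (by decide) _ _]
    obtain ⟨L', hL'1, hL'2⟩ := ih (c' 0 + c' 1 + c' 2 + c' 3) (by omega) c' rfl
    have hsum : (∑ j, c' j) + 1 = ∑ j, c j := by rw [hdec, sum_ee]
    obtain ⟨L₁, hL11, hL12⟩ := evalL_prepend 0 PR0 ((∑ j, c' j) + 1) L' hL'1
    refine ⟨L₁ ++ [(-1, c)], ?_, ?_⟩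
    · intro t ht
      rcases List.mem_append.1 ht with ht | ht
      · have := hL11 t ht; omega
      · simp at ht; subst ht
        show (∑ j, c j) ≤ _; omega
    · intro U hU w hw p hp
      have hg : Sm U (GamPow c' w) := hw.gamPow hU c'
      rw [evalL_append]
      calc Gam 4 (GamPow c w) p = Gam 4 (Gam 0 (GamPow c' w)) p := by rw [hdec, ← prep0]
        _ = Gam 0 (Gam 4 (GamPow c' w)) p - Gam 0 (GamPow c' w) p := g40 hg hU hp
        _ = Gam 0 (fun q => evalL L' w q) p + evalL [((-1 : ℝ), c)] w p := by
            rw [gam_congr hU hp (fun q hq => hL'2 U hU w hw q hq) 0, prep0 c' w, ← hdec]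
            have hev : evalL [((-1:ℝ), c)] w p = -GamPow c w p := by simp [evalL]
            rw [hev]; ring
        _ = _ := by rw [gam_evalL hw hU hp 0 L', hL12 U hU w hw p hp]

lemma PR (i : Fin 5) (c : Fin 5 → ℕ) : ∃ L, PRspec i c L := by
  fin_cases i
  exacts [PR0 c, PR1 c, PR2 c, PR3 c, PR4 c]
/-! ### pd-inside representations -/

def evalD (L : List (ℝ × (Fin 5 → ℕ) × Fin 3)) (w : Pt → ℝ) (p : Pt) : ℝ :=
  (L.map fun t => t.1 * GamPow t.2.1 (pd t.2.2 w) p).sum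

def scaleD (r : ℝ) (L : List (ℝ × (Fin 5 → ℕ) × Fin 3)) : List (ℝ × (Fin 5 → ℕ) × Fin 3) :=
  L.map fun t => (r * t.1, t.2)

lemma list_sum_map_mul {α : Type*} (r : ℝ) (g : α → ℝ) (L : List α) :
    (L.map fun s => r * g s).sum = r * (L.map g).sum := by
  induction L with
  | nil => simp
  | cons a la ih => simp [ih]; ring

section DLists
variable {U : Set Pt} {w : Pt → ℝ} {p : Pt}

lemma evalD_cons (t) (L : List (ℝ × (Fin 5 → ℕ) × Fin 3)) :
    evalD (t :: L) w p = t.1 * GamPow t.2.1 (pd t.2.2 w) p + evalD L w p := rfl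

lemma evalD_append (L₁ L₂ : List (ℝ × (Fin 5 → ℕ) × Fin 3)) :
    evalD (L₁ ++ L₂) w p = evalD L₁ w p + evalD L₂ w p := by simp [evalD]

lemma evalD_scale (r : ℝ) (L : List (ℝ × (Fin 5 → ℕ) × Fin 3)) :
    evalD (scaleD r L) w p = r * evalD L w p := by
  induction L with
  | nil => simp [evalD, scaleD]
  | cons t L ih => simp only [scaleD, List.map_cons, evalD_cons] at *; rw [ih]; ring

lemma scaleD_mem {r : ℝ} {L : List (ℝ × (Fin 5 → ℕ) × Fin 3)} {t} (ht : t ∈ scaleD r L) :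
    ∃ s ∈ L, t.2 = s.2 := by
  simp only [scaleD, List.mem_map] at ht
  obtain ⟨s, hs, rfl⟩ := ht
  exact ⟨s, hs, rfl⟩

lemma Sm.evalD (hw : Sm U w) (hU : IsOpen U) (L : List (ℝ × (Fin 5 → ℕ) × Fin 3)) :
    Sm U (fun p => evalD L w p) := by
  induction L with
  | nil => exact (show Sm U (fun _ => (0:ℝ)) from contDiffOn_const)
  | cons t L ih =>
    simp only [evalD_cons]
    exact (contDiffOn_const.mul ((hw.pd hU t.2.2).gamPow hU t.2.1)).add ih

lemma gam_evalD (hw : Sm U w) (hU : IsOpen U) (hp : p ∈ U) (i : Fin 5)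
    (L : List (ℝ × (Fin 5 → ℕ) × Fin 3)) :
    Gam i (fun q => evalD L w q) p
      = (L.map fun t => t.1 * Gam i (GamPow t.2.1 (pd t.2.2 w)) p).sum := by
  induction L with
  | nil =>
    simp only [evalD, List.map_nil, List.sum_nil]
    have : (fun _ : Pt => (0:ℝ)) = (fun q => (0:ℝ) * w q) := by funext; ring
    calc Gam i (fun _ => (0:ℝ)) p = (0:ℝ) * Gam i w p := by
          rw [this, gam_const_mul (hw.diffAt hU hp)]
      _ = 0 := by ring
  | cons t L ih =>
    have hsm : Sm U (GamPow t.2.1 (pd t.2.2 w)) := (hw.pd hU t.2.2).gamPow hU t.2.1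
    have h1 : DifferentiableAt ℝ (fun q => t.1 * GamPow t.2.1 (pd t.2.2 w) q) p :=
      Sm.diffAt (contDiffOn_const.mul hsm) hU hp
    have h2 : DifferentiableAt ℝ (fun q => evalD L w q) p :=
      Sm.diffAt (hw.evalD hU L) hU hp
    calc Gam i (fun q => evalD (t :: L) w q) p
        = Gam i (fun q => (fun q => t.1 * GamPow t.2.1 (pd t.2.2 w) q) q
            + (fun q => evalD L w q) q) p := rfl
      _ = Gam i (fun q => t.1 * GamPow t.2.1 (pd t.2.2 w) q) p
            + Gam i (fun q => evalD L w q) p := gam_add h1 h2 i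
      _ = t.1 * Gam i (GamPow t.2.1 (pd t.2.2 w)) p
            + (L.map fun t => t.1 * Gam i (GamPow t.2.1 (pd t.2.2 w)) p).sum := by
          rw [gam_const_mul (hsm.diffAt hU hp), ih]
      _ = _ := by simp

lemma evalD_prepend (i : Fin 5)
    (N : ℕ) (L' : List (ℝ × (Fin 5 → ℕ) × Fin 3)) (hL' : ∀ t ∈ L', (∑ j, t.2.1 j) ≤ N) :
    ∃ L, (∀ t ∈ L, (∑ j, t.2.1 j) ≤ N + 1) ∧
      ∀ (U : Set Pt), IsOpen U → ∀ w, Sm U w → ∀ p ∈ U,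
        (L'.map fun t => t.1 * Gam i (GamPow t.2.1 (pd t.2.2 w)) p).sum = evalD L w p := by
  induction L' with
  | nil => exact ⟨[], by simp, by intros; simp [evalD]⟩
  | cons t rest ih =>
    obtain ⟨Lr, hr1, hr2⟩ := ih (fun s hs => hL' s (List.mem_cons_of_mem _ hs))
    obtain ⟨Lh, hh1, hh2⟩ := PR i t.2.1
    refine ⟨(Lh.map fun s => (t.1 * s.1, s.2, t.2.2)) ++ Lr, ?_, ?_⟩
    · intro s hs
      rcases List.mem_append.1 hs with hs | hs
      · simp only [List.mem_map] at hs
        obtain ⟨s', hs', rfl⟩ := hs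
        exact le_trans (hh1 s' hs') (by have := hL' t (List.mem_cons_self); omega)
      · exact hr1 s hs
    · intro U hU w hw p hp
      have key : evalD (Lh.map fun s => (t.1 * s.1, s.2, t.2.2)) w p
          = t.1 * evalL Lh (pd t.2.2 w) p := by
        unfold evalD evalL
        rw [List.map_map]
        have he : ((fun t' : ℝ × (Fin 5 → ℕ) × Fin 3 =>
              t'.1 * GamPow t'.2.1 (pd t'.2.2 w) p) ∘
            (fun s : ℝ × (Fin 5 → ℕ) => (t.1 * s.1, s.2, t.2.2)))
            = fun s : ℝ × (Fin 5 → ℕ) => t.1 * (s.1 * GamPow s.2 (pd t.2.2 w) p) := by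
          funext s; simp; ring
        rw [he, list_sum_map_mul]
      rw [List.map_cons, List.sum_cons, evalD_append, ← hr2 U hU w hw p hp, key,
        hh2 U hU (pd t.2.2 w) (hw.pd hU t.2.2) p hp]

end DLists
lemma CONV : ∀ (c : Fin 5 → ℕ) (α : Fin 3),
    ∃ L, (∀ t ∈ L, (∑ j, t.2.1 j) ≤ ∑ j, c j) ∧
      ∀ (U : Set Pt), IsOpen U → ∀ w, Sm U w → ∀ p ∈ U,
        pd α (GamPow c w) p = evalD L w p := by
  suffices H : ∀ N (c : Fin 5 → ℕ), (∑ j, c j) = N → ∀ α, ∃ L,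
      (∀ t ∈ L, (∑ j, t.2.1 j) ≤ ∑ j, c j) ∧
      ∀ (U : Set Pt), IsOpen U → ∀ w, Sm U w → ∀ p ∈ U,
        pd α (GamPow c w) p = evalD L w p by
    intro c α; exact H _ c rfl α
  intro N
  induction N using Nat.strong_induction_on with
  | _ N ih =>
  intro c hN α
  have hsum5 : c 0 + c 1 + c 2 + c 3 + c 4 = ∑ j, c j := by
    rw [Fin.sum_univ_five]
  by_cases h0 : c 0 = 0
  · by_cases h1 : c 1 = 0
    · by_cases h2 : c 2 = 0
      · by_cases h3 : c 3 = 0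
        · by_cases h4 : c 4 = 0
          · -- all zero
            refine ⟨[(1, c, α)], by intro t ht; simp at ht; simp [ht], ?_⟩
            intro U hU w hw p hp
            have hid : ∀ u : Pt → ℝ, GamPow c u = u := by
              intro u; simp [GamPow, h0, h1, h2, h3, h4]
            rw [hid]
            simp [evalD, hid (pd α w)]
          · -- peel Gam 4
            set c' := Function.update c 4 (c 4 - 1) with hc'
            have hdec : c = c' + ee 4 := decomp c 4 h4
            have e4 : c' 4 = c 4 - 1 := Function.update_self 4 (c 4 - 1) c
            have h'0 : c' 0 = 0 := by rw [hc', Function.update_of_ne (by decide) _ _]; exact h0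
            have h'1 : c' 1 = 0 := by rw [hc', Function.update_of_ne (by decide) _ _]; exact h1
            have h'2 : c' 2 = 0 := by rw [hc', Function.update_of_ne (by decide) _ _]; exact h2
            have h'3 : c' 3 = 0 := by rw [hc', Function.update_of_ne (by decide) _ _]; exact h3
            have hsum : (∑ j, c' j) + 1 = ∑ j, c j := by rw [hdec, sum_ee]
            have hlt : (∑ j, c' j) < N := by omega
            obtain ⟨L₁, hL11, hL12⟩ := ih (∑ j, c' j) hlt c' rfl α
            obtain ⟨L₂, hL21, hL22⟩ := ih (∑ j, c' j) hlt c' rfl α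
            obtain ⟨L₃, hL31, hL32⟩ := evalD_prepend 4 (∑ j, c' j) L₁ hL11
            refine ⟨L₃ ++ L₂, ?_, ?_⟩
            · intro t ht
              rcases List.mem_append.1 ht with ht | ht
              · have := hL31 t ht; omega
              · have := hL21 t ht; omega
            · intro U hU w hw p hp
              have hg : Sm U (GamPow c' w) := hw.gamPow hU c'
              have hpg : Sm U (pd α (GamPow c' w)) := hg.pd hU α
              rw [evalD_append]
              calc pd α (GamPow c w) p = pd α (Gam 4 (GamPow c' w)) p := by
                    rw [hdec, ← prep4 c' h'0 h'1 h'2 h'3 w]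
                _ = Gam 4 (pd α (GamPow c' w)) p + pd α (GamPow c' w) p :=
                    pd_gam4 hg hU hp α
                _ = Gam 4 (fun q => evalD L₁ w q) p + evalD L₂ w p := by
                    rw [gam_congr hU hp (fun q hq => hL12 U hU w hw q hq) 4,
                      hL22 U hU w hw p hp]
                _ = _ := by rw [gam_evalD hw hU hp 4 L₁, hL32 U hU w hw p hp]
        · -- peel Gam 3
          set c' := Function.update c 3 (c 3 - 1) with hc'
          have hdec : c = c' + ee 3 := decomp c 3 h3
          have e3 : c' 3 = c 3 - 1 := Function.update_self 3 (c 3 - 1) c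
          have h'0 : c' 0 = 0 := by rw [hc', Function.update_of_ne (by decide) _ _]; exact h0
          have h'1 : c' 1 = 0 := by rw [hc', Function.update_of_ne (by decide) _ _]; exact h1
          have h'2 : c' 2 = 0 := by rw [hc', Function.update_of_ne (by decide) _ _]; exact h2
          have hsum : (∑ j, c' j) + 1 = ∑ j, c j := by rw [hdec, sum_ee]
          have hlt : (∑ j, c' j) < N := by omega
          obtain ⟨L₁, hL11, hL12⟩ := ih (∑ j, c' j) hlt c' rfl α
          obtain ⟨L₂, hL21, hL22⟩ := ih (∑ j, c' j) hlt c' rfl 2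
          obtain ⟨L₃, hL31, hL32⟩ := ih (∑ j, c' j) hlt c' rfl 1
          obtain ⟨L₄, hL41, hL42⟩ := evalD_prepend 3 (∑ j, c' j) L₁ hL11
          refine ⟨L₄ ++ (scaleD ((dir3 α).1) L₂ ++ scaleD (-(dir3 α).2.1) L₃), ?_, ?_⟩
          · intro t ht
            rcases List.mem_append.1 ht with ht | ht
            · have := hL41 t ht; omega
            · rcases List.mem_append.1 ht with ht | ht
              · obtain ⟨s, hs, he⟩ := scaleD_mem ht
                have := hL21 s hs; rw [he]; omega
              · obtain ⟨s, hs, he⟩ := scaleD_mem ht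
                have := hL31 s hs; rw [he]; omega
          · intro U hU w hw p hp
            have hg : Sm U (GamPow c' w) := hw.gamPow hU c'
            rw [evalD_append, evalD_append, evalD_scale, evalD_scale]
            calc pd α (GamPow c w) p = pd α (Gam 3 (GamPow c' w)) p := by
                  rw [hdec, ← prep3 c' h'0 h'1 h'2 w]
              _ = Gam 3 (pd α (GamPow c' w)) p
                  + (dir3 α).1 * pd 2 (GamPow c' w) p
                  - (dir3 α).2.1 * pd 1 (GamPow c' w) p := pd_gam3 hg hU hp α
              _ = Gam 3 (fun q => evalD L₁ w q) p
                  + ((dir3 α).1 * evalD L₂ w p + -(dir3 α).2.1 * evalD L₃ w p) := by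
                  rw [gam_congr hU hp (fun q hq => hL12 U hU w hw q hq) 3,
                    hL22 U hU w hw p hp, hL32 U hU w hw p hp]; ring
              _ = _ := by rw [gam_evalD hw hU hp 3 L₁, hL42 U hU w hw p hp]
      · -- peel Gam 2
        set c' := Function.update c 2 (c 2 - 1) with hc'
        have hdec : c = c' + ee 2 := decomp c 2 h2
        have e2 : c' 2 = c 2 - 1 := Function.update_self 2 (c 2 - 1) c
        have h'0 : c' 0 = 0 := by rw [hc', Function.update_of_ne (by decide) _ _]; exact h0
        have h'1 : c' 1 = 0 := by rw [hc', Function.update_of_ne (by decide) _ _]; exact h1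
        have hsum : (∑ j, c' j) + 1 = ∑ j, c j := by rw [hdec, sum_ee]
        have hlt : (∑ j, c' j) < N := by omega
        obtain ⟨L₁, hL11, hL12⟩ := ih (∑ j, c' j) hlt c' rfl α
        obtain ⟨L₂, hL21, hL22⟩ := evalD_prepend 2 (∑ j, c' j) L₁ hL11
        refine ⟨L₂, fun t ht => by have := hL21 t ht; omega, ?_⟩
        intro U hU w hw p hp
        have hg : Sm U (GamPow c' w) := hw.gamPow hU c'
        calc pd α (GamPow c w) p = pd α (Gam 2 (GamPow c' w)) p := by
              rw [hdec, ← prep2 c' h'0 h'1 w]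
          _ = Gam 2 (pd α (GamPow c' w)) p := pd_comm hg hU hp α 2
          _ = Gam 2 (fun q => evalD L₁ w q) p :=
              gam_congr hU hp (fun q hq => hL12 U hU w hw q hq) 2
          _ = _ := gam_evalD hw hU hp 2 L₁
          _ = evalD L₂ w p := hL22 U hU w hw p hp
    · -- peel Gam 1
      set c' := Function.update c 1 (c 1 - 1) with hc'
      have hdec : c = c' + ee 1 := decomp c 1 h1
      have e1 : c' 1 = c 1 - 1 := Function.update_self 1 (c 1 - 1) c
      have h'0 : c' 0 = 0 := by rw [hc', Function.update_of_ne (by decide) _ _]; exact h0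
      have hsum : (∑ j, c' j) + 1 = ∑ j, c j := by rw [hdec, sum_ee]
      have hlt : (∑ j, c' j) < N := by omega
      obtain ⟨L₁, hL11, hL12⟩ := ih (∑ j, c' j) hlt c' rfl α
      obtain ⟨L₂, hL21, hL22⟩ := evalD_prepend 1 (∑ j, c' j) L₁ hL11
      refine ⟨L₂, fun t ht => by have := hL21 t ht; omega, ?_⟩
      intro U hU w hw p hp
      have hg : Sm U (GamPow c' w) := hw.gamPow hU c'
      calc pd α (GamPow c w) p = pd α (Gam 1 (GamPow c' w)) p := by
            rw [hdec, ← prep1 c' h'0 w]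
        _ = Gam 1 (pd α (GamPow c' w)) p := pd_comm hg hU hp α 1
        _ = Gam 1 (fun q => evalD L₁ w q) p :=
            gam_congr hU hp (fun q hq => hL12 U hU w hw q hq) 1
        _ = _ := gam_evalD hw hU hp 1 L₁
        _ = evalD L₂ w p := hL22 U hU w hw p hp
  · -- peel Gam 0
    set c' := Function.update c 0 (c 0 - 1) with hc'
    have hdec : c = c' + ee 0 := decomp c 0 h0
    have e0 : c' 0 = c 0 - 1 := Function.update_self 0 (c 0 - 1) c
    have hsum : (∑ j, c' j) + 1 = ∑ j, c j := by rw [hdec, sum_ee]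
    have hlt : (∑ j, c' j) < N := by omega
    obtain ⟨L₁, hL11, hL12⟩ := ih (∑ j, c' j) hlt c' rfl α
    obtain ⟨L₂, hL21, hL22⟩ := evalD_prepend 0 (∑ j, c' j) L₁ hL11
    refine ⟨L₂, fun t ht => by have := hL21 t ht; omega, ?_⟩
    intro U hU w hw p hp
    have hg : Sm U (GamPow c' w) := hw.gamPow hU c'
    calc pd α (GamPow c w) p = pd α (Gam 0 (GamPow c' w)) p := by rw [hdec, ← prep0]
      _ = Gam 0 (pd α (GamPow c' w)) p := pd_comm hg hU hp α 0
      _ = Gam 0 (fun q => evalD L₁ w q) p :=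
          gam_congr hU hp (fun q hq => hL12 U hU w hw q hq) 0
      _ = _ := gam_evalD hw hU hp 0 L₁
      _ = evalD L₂ w p := hL22 U hU w hw p hp
/-! ### quadratic forms -/

def QB (B : Fin 3 → Fin 3 → ℝ) (u w : Pt → ℝ) (p : Pt) : ℝ :=
  ∑ α : Fin 3, ∑ β : Fin 3, B α β * pd α u p * pd β w p

def NullC (cj : ℝ) (B : Fin 3 → Fin 3 → ℝ) : Prop :=
  ∀ X : Fin 3 → ℝ, (X 0) ^ 2 = cj ^ 2 * ((X 1) ^ 2 + (X 2) ^ 2) →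
    ∑ α : Fin 3, ∑ β : Fin 3, B α β * X α * X β = 0

def rot3 (B : Fin 3 → Fin 3 → ℝ) : Fin 3 → Fin 3 → ℝ := fun α β =>
  (if α = 1 then B 2 β else if α = 2 then -B 1 β else 0)
  + (if β = 1 then B α 2 else if β = 2 then -(B α 1) else 0)

def corrE (i : Fin 5) (α : Fin 3) (u : Pt → ℝ) (p : Pt) : ℝ :=
  if i = 3 then (dir3 α).1 * pd 2 u p - (dir3 α).2.1 * pd 1 u p
  else if i = 4 then pd α u p else 0

def corrB (i : Fin 5) (B : Fin 3 → Fin 3 → ℝ) : Fin 3 → Fin 3 → ℝ :=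
  if i = 3 then rot3 B else if i = 4 then (fun α β => (-2) * B α β) else (fun _ _ => 0)

lemma null_zero (cj : ℝ) : NullC cj (fun _ _ => 0) := by
  intro X hX; simp

lemma null_neg2 {cj : ℝ} {B} (hB : NullC cj B) : NullC cj (fun α β => (-2) * B α β) := by
  intro X hX
  have := hB X hX
  simp only [Fin.sum_univ_three] at this ⊢
  linarith

lemma null_rot3 {cj : ℝ} {B} (hB : NullC cj B) : NullC cj (rot3 B) := by
  intro X hX
  have h5 := hB X hX
  have h1 := hB ![X 0, -X 2, X 1] (by
    simp only [Matrix.cons_val_zero, Matrix.cons_val_one, Matrix.head_cons,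
      Matrix.cons_val_two, Matrix.tail_cons]
    rw [hX]; ring)
  have h2 := hB ![X 0, X 2, -X 1] (by
    simp only [Matrix.cons_val_zero, Matrix.cons_val_one, Matrix.head_cons,
      Matrix.cons_val_two, Matrix.tail_cons]
    rw [hX]; ring)
  have h3 := hB ![X 0, (3*X 1 - 4*X 2)/5, (4*X 1 + 3*X 2)/5] (by
    simp only [Matrix.cons_val_zero, Matrix.cons_val_one, Matrix.head_cons,
      Matrix.cons_val_two, Matrix.tail_cons]
    rw [hX]; ring)
  have h4 := hB ![X 0, (3*X 1 + 4*X 2)/5, (-(4*X 1) + 3*X 2)/5] (by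
    simp only [Matrix.cons_val_zero, Matrix.cons_val_one, Matrix.head_cons,
      Matrix.cons_val_two, Matrix.tail_cons]
    rw [hX]; ring)
  simp only [Fin.sum_univ_three, Matrix.cons_val_zero, Matrix.cons_val_one, Matrix.head_cons,
    Matrix.cons_val_two, Matrix.tail_cons] at h1 h2 h3 h4 h5 ⊢
  simp only [rot3, Fin.ext_iff]
  norm_num
  linear_combination (25/24 : ℝ) * h3 - (25/24 : ℝ) * h4 - (1/3 : ℝ) * h1 + (1/3 : ℝ) * h2

lemma corrB3 (B : Fin 3 → Fin 3 → ℝ) : corrB 3 B = rot3 B := rfl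
lemma corrB4 (B : Fin 3 → Fin 3 → ℝ) : corrB 4 B = fun α β => (-2) * B α β := rfl

lemma null_corrB {cj : ℝ} {B} (hB : NullC cj B) (i : Fin 5) : NullC cj (corrB i B) := by
  fin_cases i
  · exact null_zero cj
  · exact null_zero cj
  · exact null_zero cj
  · exact (corrB3 B) ▸ null_rot3 hB
  · exact (corrB4 B) ▸ null_neg2 hB

lemma null_smul {cj : ℝ} {B} (hB : NullC cj B) (r : ℝ) :
    NullC cj (fun α β => r * B α β) := by
  intro X hX
  have := hB X hX
  simp only [Fin.sum_univ_three] at this ⊢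
  linarith [mul_eq_mul_left_iff.mpr (Or.inl this : _ ∨ r = 0)]
section GamQ
variable {U : Set Pt} {u w f g : Pt → ℝ} {p : Pt}

lemma pd_finsum {ι : Type*} (s : Finset ι) (F : ι → Pt → ℝ)
    (hF : ∀ m ∈ s, DifferentiableAt ℝ (F m) p) (α : Fin 3) :
    pd α (fun q => ∑ m ∈ s, F m q) p = ∑ m ∈ s, pd α (F m) p := by
  simp only [pd]
  rw [fderiv_fun_sum hF]
  simp

lemma gam_finsum {ι : Type*} (s : Finset ι) (F : ι → Pt → ℝ)
    (hF : ∀ m ∈ s, DifferentiableAt ℝ (F m) p) (i : Fin 5) :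
    Gam i (fun q => ∑ m ∈ s, F m q) p = ∑ m ∈ s, Gam i (F m) p := by
  fin_cases i
  · exact pd_finsum s F hF 0
  · exact pd_finsum s F hF 1
  · exact pd_finsum s F hF 2
  · show p.1 * pd 2 _ p - p.2.1 * pd 1 _ p = _
    rw [pd_finsum s F hF 2, pd_finsum s F hF 1, Finset.mul_sum, Finset.mul_sum,
      ← Finset.sum_sub_distrib]
    rfl
  · show p.2.2 * pd 0 _ p + p.1 * pd 1 _ p + p.2.1 * pd 2 _ p = _
    rw [pd_finsum s F hF 0, pd_finsum s F hF 1, pd_finsum s F hF 2,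
      Finset.mul_sum, Finset.mul_sum, Finset.mul_sum,
      ← Finset.sum_add_distrib, ← Finset.sum_add_distrib]
    rfl

lemma gam_mul (hf : DifferentiableAt ℝ f p) (hg : DifferentiableAt ℝ g p) (i : Fin 5) :
    Gam i (fun q => f q * g q) p = Gam i f p * g p + f p * Gam i g p := by
  fin_cases i
  · show pd 0 (fun q => f q * g q) p = pd 0 f p * g p + f p * pd 0 g p
    rw [pd_mul hf hg]; ring
  · show pd 1 (fun q => f q * g q) p = pd 1 f p * g p + f p * pd 1 g p
    rw [pd_mul hf hg]; ring
  · show pd 2 (fun q => f q * g q) p = pd 2 f p * g p + f p * pd 2 g p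
    rw [pd_mul hf hg]; ring
  · show p.1 * pd 2 (fun q => f q * g q) p - p.2.1 * pd 1 (fun q => f q * g q) p
        = (p.1 * pd 2 f p - p.2.1 * pd 1 f p) * g p + f p * (p.1 * pd 2 g p - p.2.1 * pd 1 g p)
    rw [pd_mul hf hg, pd_mul hf hg]; ring
  · show p.2.2 * pd 0 (fun q => f q * g q) p + p.1 * pd 1 (fun q => f q * g q) p
        + p.2.1 * pd 2 (fun q => f q * g q) p
        = (p.2.2 * pd 0 f p + p.1 * pd 1 f p + p.2.1 * pd 2 f p) * g p
          + f p * (p.2.2 * pd 0 g p + p.1 * pd 1 g p + p.2.1 * pd 2 g p)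
    rw [pd_mul hf hg, pd_mul hf hg, pd_mul hf hg]; ring

lemma gam_pd (i : Fin 5) (α : Fin 3) (hu : Sm U u) (hU : IsOpen U) (hp : p ∈ U) :
    Gam i (pd α u) p = pd α (Gam i u) p - corrE i α u p := by
  fin_cases i
  · show pd 0 (pd α u) p = pd α (pd 0 u) p - corrE 0 α u p
    rw [pd_comm hu hU hp α 0]; simp [corrE]
  · show pd 1 (pd α u) p = pd α (pd 1 u) p - corrE 1 α u p
    rw [pd_comm hu hU hp α 1]; simp [corrE]
  · show pd 2 (pd α u) p = pd α (pd 2 u) p - corrE 2 α u p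
    rw [pd_comm hu hU hp α 2]; simp [corrE]
  · have := pd_gam3 hu hU hp α
    show Gam 3 (pd α u) p = pd α (Gam 3 u) p - corrE 3 α u p
    have hc : corrE 3 α u p = (dir3 α).1 * pd 2 u p - (dir3 α).2.1 * pd 1 u p := rfl
    rw [hc]; linarith
  · have := pd_gam4 hu hU hp α
    show Gam 4 (pd α u) p = pd α (Gam 4 u) p - corrE 4 α u p
    have hc : corrE 4 α u p = pd α u p := rfl
    rw [hc]; linarith

lemma corr_sum (i : Fin 5) (B : Fin 3 → Fin 3 → ℝ) (u w : Pt → ℝ) (p : Pt) :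
    ∑ α : Fin 3, ∑ β : Fin 3,
        B α β * (corrE i α u p * pd β w p + pd α u p * corrE i β w p)
      = - QB (corrB i B) u w p := by
  have hc0 : ∀ (j : Fin 5), j = 0 ∨ j = 1 ∨ j = 2 →
      (∀ (α : Fin 3) (u : Pt → ℝ), corrE j α u p = 0) ∧ corrB j B = fun _ _ => 0 := by
    intro j hj
    rcases hj with rfl | rfl | rfl <;> exact ⟨fun α u => rfl, rfl⟩
  fin_cases i
  · obtain ⟨h, h'⟩ := hc0 0 (Or.inl rfl); simp [h, h', QB]
  · obtain ⟨h, h'⟩ := hc0 1 (Or.inr (Or.inl rfl)); simp [h, h', QB]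
  · obtain ⟨h, h'⟩ := hc0 2 (Or.inr (Or.inr rfl)); simp [h, h', QB]
  · have h : ∀ (α : Fin 3) (u : Pt → ℝ),
        corrE 3 α u p = (dir3 α).1 * pd 2 u p - (dir3 α).2.1 * pd 1 u p := fun _ _ => rfl
    have h' : corrB 3 B = rot3 B := rfl
    show (∑ α : Fin 3, ∑ β : Fin 3,
        B α β * (corrE 3 α u p * pd β w p + pd α u p * corrE 3 β w p)) = - QB (corrB 3 B) u w p
    simp only [h, h', QB, rot3, Fin.sum_univ_three, dir3, Fin.ext_iff]
    norm_num
    ring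
  · have h : ∀ (α : Fin 3) (u : Pt → ℝ), corrE 4 α u p = pd α u p := fun _ _ => rfl
    have h' : corrB 4 B = fun α β => (-2) * B α β := rfl
    show (∑ α : Fin 3, ∑ β : Fin 3,
        B α β * (corrE 4 α u p * pd β w p + pd α u p * corrE 4 β w p)) = - QB (corrB 4 B) u w p
    simp only [h, h', QB, Fin.sum_univ_three]
    ring

lemma gamQB (i : Fin 5) (hu : Sm U u) (hw : Sm U w) (hU : IsOpen U) (hp : p ∈ U)
    (B : Fin 3 → Fin 3 → ℝ) :
    Gam i (fun q => QB B u w q) p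
      = QB B (Gam i u) w p + QB B u (Gam i w) p + QB (corrB i B) u w p := by
  have hdα : ∀ α : Fin 3, DifferentiableAt ℝ (pd α u) p :=
    fun α => (hu.pd hU α).diffAt hU hp
  have hdβ : ∀ β : Fin 3, DifferentiableAt ℝ (pd β w) p :=
    fun β => (hw.pd hU β).diffAt hU hp
  have hterm : ∀ (α β : Fin 3), DifferentiableAt ℝ (fun q => B α β * pd α u q * pd β w q) p :=
    fun α β => ((differentiableAt_const _).mul (hdα α)).mul (hdβ β)
  have hrow : ∀ α : Fin 3,
      DifferentiableAt ℝ (fun q => ∑ β : Fin 3, B α β * pd α u q * pd β w q) p :=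
    fun α => DifferentiableAt.fun_sum (fun β _ => hterm α β)
  have step1 : Gam i (fun q => QB B u w q) p
      = ∑ α : Fin 3, ∑ β : Fin 3, Gam i (fun q => B α β * pd α u q * pd β w q) p := by
    rw [show (fun q => QB B u w q)
        = (fun q => ∑ α : Fin 3, (fun α' q' => ∑ β : Fin 3, B α' β * pd α' u q' * pd β w q') α q)
        from rfl]
    rw [gam_finsum Finset.univ _ (fun α _ => hrow α) i]
    exact Finset.sum_congr rfl (fun α _ => gam_finsum Finset.univ _ (fun β _ => hterm α β) i)
  have step2 : ∀ α β : Fin 3, Gam i (fun q => B α β * pd α u q * pd β w q) p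
      = B α β * ((pd α (Gam i u) p - corrE i α u p) * pd β w p
        + pd α u p * (pd β (Gam i w) p - corrE i β w p)) := by
    intro α β
    have e : (fun q => B α β * pd α u q * pd β w q)
        = (fun q => B α β * ((fun q' => pd α u q') q * (fun q' => pd β w q') q)) := by
      funext q; ring
    rw [e, gam_const_mul ((hdα α).fun_mul (hdβ β)), gam_mul (hdα α) (hdβ β),
      gam_pd i α hu hU hp, gam_pd i β hw hU hp]
  rw [step1]
  simp only [step2]
  have hc := corr_sum i B u w p
  have expand : ∀ α β : Fin 3,
      B α β * ((pd α (Gam i u) p - corrE i α u p) * pd β w p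
        + pd α u p * (pd β (Gam i w) p - corrE i β w p))
      = (B α β * pd α (Gam i u) p * pd β w p + B α β * pd α u p * pd β (Gam i w) p)
        - B α β * (corrE i α u p * pd β w p + pd α u p * corrE i β w p) :=
    fun α β => by ring
  simp only [expand, Finset.sum_sub_distrib, Finset.sum_add_distrib]
  rw [hc]
  show _ = QB B (Gam i u) w p + QB B u (Gam i w) p + QB (corrB i B) u w p
  simp only [QB]
  ring

end GamQ
/-! ### Q-lists -/

abbrev QItem := (Fin 3 → Fin 3 → ℝ) × (Fin 5 → ℕ) × (Fin 5 → ℕ)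

def evalQ (L : List QItem) (w : Pt → ℝ) (p : Pt) : ℝ :=
  (L.map fun t => QB t.1 (GamPow t.2.1 w) (GamPow t.2.2 w) p).sum

section QLists
variable {U : Set Pt} {u w f g : Pt → ℝ} {p : Pt}

lemma Sm.qb (hu : Sm U u) (hw : Sm U w) (hU : IsOpen U) (B : Fin 3 → Fin 3 → ℝ) :
    Sm U (fun p => QB B u w p) := by
  apply ContDiffOn.sum
  intro α _
  apply ContDiffOn.sum
  intro β _
  exact (contDiffOn_const.mul (hu.pd hU α)).mul (hw.pd hU β)

lemma evalQ_cons (t : QItem) (L : List QItem) :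
    evalQ (t :: L) w p = QB t.1 (GamPow t.2.1 w) (GamPow t.2.2 w) p + evalQ L w p := rfl

lemma evalQ_append (L₁ L₂ : List QItem) :
    evalQ (L₁ ++ L₂) w p = evalQ L₁ w p + evalQ L₂ w p := by simp [evalQ]

lemma Sm.evalQ (hw : Sm U w) (hU : IsOpen U) (L : List QItem) :
    Sm U (fun p => evalQ L w p) := by
  induction L with
  | nil => exact (show Sm U (fun _ => (0:ℝ)) from contDiffOn_const)
  | cons t L ih =>
    simp only [evalQ_cons]
    exact (((hw.gamPow hU t.2.1).qb (hw.gamPow hU t.2.2) hU t.1)).add ih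

lemma gam_evalQ (hw : Sm U w) (hU : IsOpen U) (hp : p ∈ U) (i : Fin 5) (L : List QItem) :
    Gam i (fun q => evalQ L w q) p
      = (L.map fun t =>
          Gam i (fun q => QB t.1 (GamPow t.2.1 w) (GamPow t.2.2 w) q) p).sum := by
  induction L with
  | nil =>
    simp only [evalQ, List.map_nil, List.sum_nil]
    have : (fun _ : Pt => (0:ℝ)) = (fun q => (0:ℝ) * w q) := by funext; ring
    calc Gam i (fun _ => (0:ℝ)) p = (0:ℝ) * Gam i w p := by
          rw [this, gam_const_mul (hw.diffAt hU hp)]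
      _ = 0 := by ring
  | cons t L ih =>
    have hsm : Sm U (fun q => QB t.1 (GamPow t.2.1 w) (GamPow t.2.2 w) q) :=
      (hw.gamPow hU t.2.1).qb (hw.gamPow hU t.2.2) hU t.1
    have h1 : DifferentiableAt ℝ (fun q => QB t.1 (GamPow t.2.1 w) (GamPow t.2.2 w) q) p :=
      hsm.diffAt hU hp
    have h2 : DifferentiableAt ℝ (fun q => evalQ L w q) p :=
      Sm.diffAt (hw.evalQ hU L) hU hp
    calc Gam i (fun q => evalQ (t :: L) w q) p
        = Gam i (fun q => (fun q => QB t.1 (GamPow t.2.1 w) (GamPow t.2.2 w) q) q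
            + (fun q => evalQ L w q) q) p := rfl
      _ = Gam i (fun q => QB t.1 (GamPow t.2.1 w) (GamPow t.2.2 w) q) p
            + Gam i (fun q => evalQ L w q) p := gam_add h1 h2 i
      _ = _ := by rw [ih]; simp

lemma QB_congr_left (hU : IsOpen U) (hp : p ∈ U) (hfg : ∀ q ∈ U, f q = g q)
    (B : Fin 3 → Fin 3 → ℝ) : QB B f w p = QB B g w p := by
  simp only [QB]
  exact Finset.sum_congr rfl fun α _ => Finset.sum_congr rfl fun β _ => by
    rw [pd_congr hfg hU hp α]

lemma QB_congr_right (hU : IsOpen U) (hp : p ∈ U) (hfg : ∀ q ∈ U, f q = g q)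
    (B : Fin 3 → Fin 3 → ℝ) : QB B w f p = QB B w g p := by
  simp only [QB]
  exact Finset.sum_congr rfl fun α _ => Finset.sum_congr rfl fun β _ => by
    rw [pd_congr hfg hU hp β]

lemma QB_add_left (hf : DifferentiableAt ℝ f p) (hg : DifferentiableAt ℝ g p)
    (B : Fin 3 → Fin 3 → ℝ) :
    QB B (fun q => f q + g q) w p = QB B f w p + QB B g w p := by
  simp only [QB, pd_add hf hg]
  rw [← Finset.sum_add_distrib]
  exact Finset.sum_congr rfl fun α _ => by
    rw [← Finset.sum_add_distrib]
    exact Finset.sum_congr rfl fun β _ => by ring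

lemma QB_smul_left (hf : DifferentiableAt ℝ f p) (r : ℝ) (B : Fin 3 → Fin 3 → ℝ) :
    QB B (fun q => r * f q) w p = r * QB B f w p := by
  simp only [QB, pd_const_mul hf]
  rw [Finset.mul_sum]
  exact Finset.sum_congr rfl fun α _ => by
    rw [Finset.mul_sum]
    exact Finset.sum_congr rfl fun β _ => by ring

lemma QB_add_right (hf : DifferentiableAt ℝ f p) (hg : DifferentiableAt ℝ g p)
    (B : Fin 3 → Fin 3 → ℝ) :
    QB B w (fun q => f q + g q) p = QB B w f p + QB B w g p := by
  simp only [QB, pd_add hf hg]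
  rw [← Finset.sum_add_distrib]
  exact Finset.sum_congr rfl fun α _ => by
    rw [← Finset.sum_add_distrib]
    exact Finset.sum_congr rfl fun β _ => by ring

lemma QB_smul_right (hf : DifferentiableAt ℝ f p) (r : ℝ) (B : Fin 3 → Fin 3 → ℝ) :
    QB B w (fun q => r * f q) p = r * QB B w f p := by
  simp only [QB, pd_const_mul hf]
  rw [Finset.mul_sum]
  exact Finset.sum_congr rfl fun α _ => by
    rw [Finset.mul_sum]
    exact Finset.sum_congr rfl fun β _ => by ring

lemma QB_smulB (r : ℝ) (B : Fin 3 → Fin 3 → ℝ) :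
    QB (fun α β => r * B α β) u w p = r * QB B u w p := by
  simp only [QB]
  rw [Finset.mul_sum]
  exact Finset.sum_congr rfl fun α _ => by
    rw [Finset.mul_sum]
    exact Finset.sum_congr rfl fun β _ => by ring

lemma QB_evalL_left (hw : Sm U w) (hU : IsOpen U) (hp : p ∈ U)
    (B : Fin 3 → Fin 3 → ℝ) (L : List (ℝ × (Fin 5 → ℕ))) (u : Pt → ℝ) (hu : Sm U u) :
    QB B (fun q => evalL L w q) u p
      = (L.map fun s => s.1 * QB B (GamPow s.2 w) u p).sum := by
  induction L with
  | nil =>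
    simp only [evalL, List.map_nil, List.sum_nil]
    have e : (fun _ : Pt => (0:ℝ)) = (fun q => (0:ℝ) * w q) := by funext; ring
    rw [e, QB_smul_left (hw.diffAt hU hp)]; ring
  | cons t L ih =>
    have h1 : DifferentiableAt ℝ (fun q => t.1 * GamPow t.2 w q) p :=
      Sm.diffAt (contDiffOn_const.mul (hw.gamPow hU t.2)) hU hp
    have h2 : DifferentiableAt ℝ (fun q => evalL L w q) p :=
      Sm.diffAt (hw.evalL hU L) hU hp
    calc QB B (fun q => evalL (t :: L) w q) u p
        = QB B (fun q => (fun q => t.1 * GamPow t.2 w q) q + (fun q => evalL L w q) q) u p := rfl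
      _ = QB B (fun q => t.1 * GamPow t.2 w q) u p + QB B (fun q => evalL L w q) u p :=
          QB_add_left h1 h2 B
      _ = t.1 * QB B (GamPow t.2 w) u p + (L.map fun s => s.1 * QB B (GamPow s.2 w) u p).sum := by
          rw [QB_smul_left ((hw.gamPow hU t.2).diffAt hU hp), ih]
      _ = _ := by simp

lemma QB_evalL_right (hw : Sm U w) (hU : IsOpen U) (hp : p ∈ U)
    (B : Fin 3 → Fin 3 → ℝ) (L : List (ℝ × (Fin 5 → ℕ))) (u : Pt → ℝ) (hu : Sm U u) :
    QB B u (fun q => evalL L w q) p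
      = (L.map fun s => s.1 * QB B u (GamPow s.2 w) p).sum := by
  induction L with
  | nil =>
    simp only [evalL, List.map_nil, List.sum_nil]
    have e : (fun _ : Pt => (0:ℝ)) = (fun q => (0:ℝ) * w q) := by funext; ring
    rw [e, QB_smul_right (hw.diffAt hU hp)]; ring
  | cons t L ih =>
    have h1 : DifferentiableAt ℝ (fun q => t.1 * GamPow t.2 w q) p :=
      Sm.diffAt (contDiffOn_const.mul (hw.gamPow hU t.2)) hU hp
    have h2 : DifferentiableAt ℝ (fun q => evalL L w q) p :=
      Sm.diffAt (hw.evalL hU L) hU hp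
    calc QB B u (fun q => evalL (t :: L) w q) p
        = QB B u (fun q => (fun q => t.1 * GamPow t.2 w q) q + (fun q => evalL L w q) q) p := rfl
      _ = QB B u (fun q => t.1 * GamPow t.2 w q) p + QB B u (fun q => evalL L w q) p :=
          QB_add_right h1 h2 B
      _ = t.1 * QB B u (GamPow t.2 w) p + (L.map fun s => s.1 * QB B u (GamPow s.2 w) p).sum := by
          rw [QB_smul_right ((hw.gamPow hU t.2).diffAt hU hp), ih]
      _ = _ := by simp

end QLists
/-! ### the main representation -/

lemma Qterm (cj : ℝ) (i : Fin 5) (t : QItem) (ht : NullC cj t.1) :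
    ∃ L : List QItem,
      (∀ s ∈ L, NullC cj s.1 ∧ (∑ j, s.2.1 j) + (∑ j, s.2.2 j)
        ≤ (∑ j, t.2.1 j) + (∑ j, t.2.2 j) + 1) ∧
      ∀ (U : Set Pt), IsOpen U → ∀ w, Sm U w → ∀ p ∈ U,
        Gam i (fun q => QB t.1 (GamPow t.2.1 w) (GamPow t.2.2 w) q) p = evalQ L w p := by
  obtain ⟨Lb, hLb1, hLb2⟩ := PR i t.2.1
  obtain ⟨Lc, hLc1, hLc2⟩ := PR i t.2.2
  refine ⟨(Lb.map fun s => ((fun α β => s.1 * t.1 α β), s.2, t.2.2))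
      ++ ((Lc.map fun s => ((fun α β => s.1 * t.1 α β), t.2.1, s.2))
        ++ [(corrB i t.1, t.2.1, t.2.2)]), ?_, ?_⟩
  · intro s hs
    rcases List.mem_append.1 hs with hs | hs
    · simp only [List.mem_map] at hs
      obtain ⟨s', hs', rfl⟩ := hs
      exact ⟨null_smul ht s'.1, by have := hLb1 s' hs'; simp only; omega⟩
    · rcases List.mem_append.1 hs with hs | hs
      · simp only [List.mem_map] at hs
        obtain ⟨s', hs', rfl⟩ := hs
        exact ⟨null_smul ht s'.1, by have := hLc1 s' hs'; simp only; omega⟩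
      · simp at hs; subst hs
        exact ⟨null_corrB ht i, by simp only; omega⟩
  · intro U hU w hw p hp
    have hu : Sm U (GamPow t.2.1 w) := hw.gamPow hU t.2.1
    have hv : Sm U (GamPow t.2.2 w) := hw.gamPow hU t.2.2
    have key1 : QB t.1 (Gam i (GamPow t.2.1 w)) (GamPow t.2.2 w) p
        = evalQ (Lb.map fun s => ((fun α β => s.1 * t.1 α β), s.2, t.2.2)) w p := by
      rw [QB_congr_left hU hp (fun q hq => hLb2 U hU w hw q hq) t.1,
        QB_evalL_left hw hU hp t.1 Lb _ hv]
      unfold evalQ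
      rw [List.map_map]
      exact (congrArg List.sum (List.map_congr_left fun s _ => by
        simp only [Function.comp]
        rw [QB_smulB])).symm
    have key2 : QB t.1 (GamPow t.2.1 w) (Gam i (GamPow t.2.2 w)) p
        = evalQ (Lc.map fun s => ((fun α β => s.1 * t.1 α β), t.2.1, s.2)) w p := by
      rw [QB_congr_right hU hp (fun q hq => hLc2 U hU w hw q hq) t.1,
        QB_evalL_right hw hU hp t.1 Lc _ hu]
      unfold evalQ
      rw [List.map_map]
      exact (congrArg List.sum (List.map_congr_left fun s _ => by
        simp only [Function.comp]
        rw [QB_smulB])).symm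
    have key3 : evalQ [(corrB i t.1, t.2.1, t.2.2)] w p
        = QB (corrB i t.1) (GamPow t.2.1 w) (GamPow t.2.2 w) p := by simp [evalQ]
    rw [gamQB i hu hv hU hp t.1, evalQ_append, evalQ_append, key1, key2, key3]
    ring

lemma Qstep (cj : ℝ) (i : Fin 5) (N : ℕ) (L' : List QItem)
    (hL' : ∀ t ∈ L', NullC cj t.1 ∧ (∑ j, t.2.1 j) + (∑ j, t.2.2 j) ≤ N) :
    ∃ L : List QItem,
      (∀ s ∈ L, NullC cj s.1 ∧ (∑ j, s.2.1 j) + (∑ j, s.2.2 j) ≤ N + 1) ∧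
      ∀ (U : Set Pt), IsOpen U → ∀ w, Sm U w → ∀ p ∈ U,
        (L'.map fun t =>
          Gam i (fun q => QB t.1 (GamPow t.2.1 w) (GamPow t.2.2 w) q) p).sum = evalQ L w p := by
  induction L' with
  | nil => exact ⟨[], by simp, by intros; simp [evalQ]⟩
  | cons t rest ih =>
    obtain ⟨Lr, hr1, hr2⟩ := ih (fun s hs => hL' s (List.mem_cons_of_mem _ hs))
    obtain ⟨Lh, hh1, hh2⟩ := Qterm cj i t (hL' t (List.mem_cons_self)).1
    refine ⟨Lh ++ Lr, ?_, ?_⟩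
    · intro s hs
      rcases List.mem_append.1 hs with hs | hs
      · obtain ⟨h1, h2⟩ := hh1 s hs
        exact ⟨h1, by have := (hL' t (List.mem_cons_self)).2; omega⟩
      · exact hr1 s hs
    · intro U hU w hw p hp
      rw [List.map_cons, List.sum_cons, evalQ_append, hh2 U hU w hw p hp,
        hr2 U hU w hw p hp]

lemma MAIN (cj : ℝ) (b : Fin 3 → Fin 3 → ℝ) (hb : NullC cj b) (a : Fin 5 → ℕ) :
    ∃ L : List QItem,
      (∀ t ∈ L, NullC cj t.1 ∧ (∑ j, t.2.1 j) + (∑ j, t.2.2 j) ≤ ∑ j, a j) ∧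
      ∀ (U : Set Pt), IsOpen U → ∀ w, Sm U w → ∀ p ∈ U,
        GamPow a (fun q => QB b w w q) p = evalQ L w p := by
  suffices H : ∀ N (a : Fin 5 → ℕ), (∑ j, a j) = N → ∃ L : List QItem,
      (∀ t ∈ L, NullC cj t.1 ∧ (∑ j, t.2.1 j) + (∑ j, t.2.2 j) ≤ ∑ j, a j) ∧
      ∀ (U : Set Pt), IsOpen U → ∀ w, Sm U w → ∀ p ∈ U,
        GamPow a (fun q => QB b w w q) p = evalQ L w p from H _ a rfl
  intro N
  induction N using Nat.strong_induction_on with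
  | _ N ih =>
  intro a hN
  have hsum5 : a 0 + a 1 + a 2 + a 3 + a 4 = ∑ j, a j := by rw [Fin.sum_univ_five]
  by_cases h0 : a 0 = 0
  case neg =>
    -- peel Gam 0
    set a' := Function.update a 0 (a 0 - 1) with ha'
    have hdec : a = a' + ee 0 := decomp a 0 h0
    have hsum : (∑ j, a' j) + 1 = ∑ j, a j := by rw [hdec, sum_ee]
    obtain ⟨L', hL'1, hL'2⟩ := ih (∑ j, a' j) (by omega) a' rfl
    obtain ⟨L, hL1, hL2⟩ := Qstep cj 0 (∑ j, a' j) L' hL'1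
    refine ⟨L, fun s hs => ⟨(hL1 s hs).1, by have := (hL1 s hs).2; omega⟩, ?_⟩
    intro U hU w hw p hp
    have hQ : Sm U (fun q => QB b w w q) := hw.qb hw hU b
    have hg : Sm U (GamPow a' (fun q => QB b w w q)) := hQ.gamPow hU a'
    calc GamPow a (fun q => QB b w w q) p
        = Gam 0 (GamPow a' (fun q => QB b w w q)) p := by rw [hdec, ← prep0]
      _ = Gam 0 (fun q => evalQ L' w q) p :=
          gam_congr hU hp (fun q hq => hL'2 U hU w hw q hq) 0
      _ = _ := gam_evalQ hw hU hp 0 L'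
      _ = evalQ L w p := hL2 U hU w hw p hp
  case pos =>
  by_cases h1 : a 1 = 0
  case neg =>
    set a' := Function.update a 1 (a 1 - 1) with ha'
    have hdec : a = a' + ee 1 := decomp a 1 h1
    have h'0 : a' 0 = 0 := by rw [ha', Function.update_of_ne (by decide) _ _]; exact h0
    have hsum : (∑ j, a' j) + 1 = ∑ j, a j := by rw [hdec, sum_ee]
    obtain ⟨L', hL'1, hL'2⟩ := ih (∑ j, a' j) (by omega) a' rfl
    obtain ⟨L, hL1, hL2⟩ := Qstep cj 1 (∑ j, a' j) L' hL'1
    refine ⟨L, fun s hs => ⟨(hL1 s hs).1, by have := (hL1 s hs).2; omega⟩, ?_⟩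
    intro U hU w hw p hp
    have hQ : Sm U (fun q => QB b w w q) := hw.qb hw hU b
    calc GamPow a (fun q => QB b w w q) p
        = Gam 1 (GamPow a' (fun q => QB b w w q)) p := by rw [hdec, ← prep1 a' h'0]
      _ = Gam 1 (fun q => evalQ L' w q) p :=
          gam_congr hU hp (fun q hq => hL'2 U hU w hw q hq) 1
      _ = _ := gam_evalQ hw hU hp 1 L'
      _ = evalQ L w p := hL2 U hU w hw p hp
  case pos =>
  by_cases h2 : a 2 = 0
  case neg =>
    set a' := Function.update a 2 (a 2 - 1) with ha'
    have hdec : a = a' + ee 2 := decomp a 2 h2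
    have h'0 : a' 0 = 0 := by rw [ha', Function.update_of_ne (by decide) _ _]; exact h0
    have h'1 : a' 1 = 0 := by rw [ha', Function.update_of_ne (by decide) _ _]; exact h1
    have hsum : (∑ j, a' j) + 1 = ∑ j, a j := by rw [hdec, sum_ee]
    obtain ⟨L', hL'1, hL'2⟩ := ih (∑ j, a' j) (by omega) a' rfl
    obtain ⟨L, hL1, hL2⟩ := Qstep cj 2 (∑ j, a' j) L' hL'1
    refine ⟨L, fun s hs => ⟨(hL1 s hs).1, by have := (hL1 s hs).2; omega⟩, ?_⟩
    intro U hU w hw p hp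
    have hQ : Sm U (fun q => QB b w w q) := hw.qb hw hU b
    calc GamPow a (fun q => QB b w w q) p
        = Gam 2 (GamPow a' (fun q => QB b w w q)) p := by rw [hdec, ← prep2 a' h'0 h'1]
      _ = Gam 2 (fun q => evalQ L' w q) p :=
          gam_congr hU hp (fun q hq => hL'2 U hU w hw q hq) 2
      _ = _ := gam_evalQ hw hU hp 2 L'
      _ = evalQ L w p := hL2 U hU w hw p hp
  case pos =>
  by_cases h3 : a 3 = 0
  case neg =>
    set a' := Function.update a 3 (a 3 - 1) with ha'
    have hdec : a = a' + ee 3 := decomp a 3 h3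
    have h'0 : a' 0 = 0 := by rw [ha', Function.update_of_ne (by decide) _ _]; exact h0
    have h'1 : a' 1 = 0 := by rw [ha', Function.update_of_ne (by decide) _ _]; exact h1
    have h'2 : a' 2 = 0 := by rw [ha', Function.update_of_ne (by decide) _ _]; exact h2
    have hsum : (∑ j, a' j) + 1 = ∑ j, a j := by rw [hdec, sum_ee]
    obtain ⟨L', hL'1, hL'2⟩ := ih (∑ j, a' j) (by omega) a' rfl
    obtain ⟨L, hL1, hL2⟩ := Qstep cj 3 (∑ j, a' j) L' hL'1
    refine ⟨L, fun s hs => ⟨(hL1 s hs).1, by have := (hL1 s hs).2; omega⟩, ?_⟩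
    intro U hU w hw p hp
    have hQ : Sm U (fun q => QB b w w q) := hw.qb hw hU b
    calc GamPow a (fun q => QB b w w q) p
        = Gam 3 (GamPow a' (fun q => QB b w w q)) p := by rw [hdec, ← prep3 a' h'0 h'1 h'2]
      _ = Gam 3 (fun q => evalQ L' w q) p :=
          gam_congr hU hp (fun q hq => hL'2 U hU w hw q hq) 3
      _ = _ := gam_evalQ hw hU hp 3 L'
      _ = evalQ L w p := hL2 U hU w hw p hp
  case pos =>
  by_cases h4 : a 4 = 0
  case neg =>
    set a' := Function.update a 4 (a 4 - 1) with ha'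
    have hdec : a = a' + ee 4 := decomp a 4 h4
    have h'0 : a' 0 = 0 := by rw [ha', Function.update_of_ne (by decide) _ _]; exact h0
    have h'1 : a' 1 = 0 := by rw [ha', Function.update_of_ne (by decide) _ _]; exact h1
    have h'2 : a' 2 = 0 := by rw [ha', Function.update_of_ne (by decide) _ _]; exact h2
    have h'3 : a' 3 = 0 := by rw [ha', Function.update_of_ne (by decide) _ _]; exact h3
    have hsum : (∑ j, a' j) + 1 = ∑ j, a j := by rw [hdec, sum_ee]
    obtain ⟨L', hL'1, hL'2⟩ := ih (∑ j, a' j) (by omega) a' rfl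
    obtain ⟨L, hL1, hL2⟩ := Qstep cj 4 (∑ j, a' j) L' hL'1
    refine ⟨L, fun s hs => ⟨(hL1 s hs).1, by have := (hL1 s hs).2; omega⟩, ?_⟩
    intro U hU w hw p hp
    have hQ : Sm U (fun q => QB b w w q) := hw.qb hw hU b
    calc GamPow a (fun q => QB b w w q) p
        = Gam 4 (GamPow a' (fun q => QB b w w q)) p := by rw [hdec, ← prep4 a' h'0 h'1 h'2 h'3]
      _ = Gam 4 (fun q => evalQ L' w q) p :=
          gam_congr hU hp (fun q hq => hL'2 U hU w hw q hq) 4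
      _ = _ := gam_evalQ hw hU hp 4 L'
      _ = evalQ L w p := hL2 U hU w hw p hp
  case pos =>
    -- all zero
    refine ⟨[(b, a, a)], ?_, ?_⟩
    · intro t ht; simp at ht; subst ht
      refine ⟨hb, ?_⟩
      simp only
      omega
    · intro U hU w hw p hp
      have hid : ∀ u : Pt → ℝ, GamPow a u = u := by
        intro u; simp [GamPow, h0, h1, h2, h3, h4]
      rw [hid]
      simp [evalQ, hid w]
/-! ### pointwise null form bound -/

def Ssum (u : Pt → ℝ) (p : Pt) : ℝ := ∑ α : Fin 3, |pd α u p|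

lemma Ssum_nonneg (u : Pt → ℝ) (p : Pt) : 0 ≤ Ssum u p :=
  Finset.sum_nonneg fun _ _ => abs_nonneg _

lemma Znorm_nonneg (cj : ℝ) (u : Pt → ℝ) (p : Pt) : 0 ≤ Znorm cj u p :=
  add_nonneg (abs_nonneg _) (abs_nonneg _)

lemma bilin_bound (B : Fin 3 → Fin 3 → ℝ) (x y : Fin 3 → ℝ) (X Y : ℝ)
    (hx : ∀ α, |x α| ≤ X) (hy : ∀ β, |y β| ≤ Y) :
    |∑ α : Fin 3, ∑ β : Fin 3, B α β * x α * y β|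
      ≤ (∑ α : Fin 3, ∑ β : Fin 3, |B α β|) * X * Y := by
  have hX : 0 ≤ X := le_trans (abs_nonneg _) (hx 0)
  have hY : 0 ≤ Y := le_trans (abs_nonneg _) (hy 0)
  calc |∑ α : Fin 3, ∑ β : Fin 3, B α β * x α * y β|
      ≤ ∑ α : Fin 3, |∑ β : Fin 3, B α β * x α * y β| := Finset.abs_sum_le_sum_abs _ _
    _ ≤ ∑ α : Fin 3, ∑ β : Fin 3, |B α β * x α * y β| :=
        Finset.sum_le_sum fun α _ => Finset.abs_sum_le_sum_abs _ _
    _ ≤ ∑ α : Fin 3, ∑ β : Fin 3, |B α β| * X * Y := by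
        refine Finset.sum_le_sum fun α _ => Finset.sum_le_sum fun β _ => ?_
        rw [abs_mul, abs_mul]
        exact mul_le_mul (mul_le_mul le_rfl (hx α) (abs_nonneg _) (abs_nonneg _)) (hy β)
          (abs_nonneg _) (by positivity)
    _ = (∑ α : Fin 3, ∑ β : Fin 3, |B α β|) * X * Y := by
        simp [Finset.sum_mul]

set_option maxHeartbeats 2000000 in
lemma null_bound (cj : ℝ) (hcj : 0 < cj) (B : Fin 3 → Fin 3 → ℝ) (hB : NullC cj B)
    (u w : Pt → ℝ) (p : Pt) (hx : ¬(p.1 = 0 ∧ p.2.1 = 0)) :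
    |QB B u w p| ≤
      ((∑ α : Fin 3, ∑ β : Fin 3, |B α β|) * (cj + 2 + max cj 1) / cj ^ 2)
        * (Znorm cj u p * Ssum w p + Ssum u p * Znorm cj w p) := by
  have harg : 0 < p.1 ^ 2 + p.2.1 ^ 2 := by
    rcases not_and_or.1 hx with h | h
    · nlinarith [sq_nonneg p.2.1, sq_abs p.1, abs_pos.mpr h]
    · nlinarith [sq_nonneg p.1, sq_abs p.2.1, abs_pos.mpr h]
  have hr : 0 < rad p := Real.sqrt_pos.mpr harg
  have hr2 : (rad p) ^ 2 = p.1 ^ 2 + p.2.1 ^ 2 := Real.sq_sqrt harg.le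
  have ho1 : |p.1 / rad p| ≤ 1 := by
    rw [abs_div, abs_of_pos hr, div_le_one hr]
    rw [show rad p = Real.sqrt (p.1 ^ 2 + p.2.1 ^ 2) from rfl]
    calc |p.1| = Real.sqrt (p.1 ^ 2) := (Real.sqrt_sq_eq_abs p.1).symm
      _ ≤ _ := Real.sqrt_le_sqrt (by nlinarith [sq_nonneg p.2.1])
  have ho2 : |p.2.1 / rad p| ≤ 1 := by
    rw [abs_div, abs_of_pos hr, div_le_one hr]
    rw [show rad p = Real.sqrt (p.1 ^ 2 + p.2.1 ^ 2) from rfl]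
    calc |p.2.1| = Real.sqrt (p.2.1 ^ 2) := (Real.sqrt_sq_eq_abs p.2.1).symm
      _ ≤ _ := Real.sqrt_le_sqrt (by nlinarith [sq_nonneg p.1])
  set o1 := p.1 / rad p with ho1d
  set o2 := p.2.1 / rad p with ho2d
  set mx := max cj 1 with hmx
  have hmx1 : (1:ℝ) ≤ mx := le_max_right _ _
  have hmx0 : (0:ℝ) < mx := lt_of_lt_of_le one_pos hmx1
  set zu : Fin 3 → ℝ := ![0, Zd cj 1 u p, Zd cj 2 u p] with hzu
  set zw : Fin 3 → ℝ := ![0, Zd cj 1 w p, Zd cj 2 w p] with hzw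
  set ov : Fin 3 → ℝ := ![-cj, o1, o2] with hov
  have hcone : (ov 0) ^ 2 = cj ^ 2 * ((ov 1) ^ 2 + (ov 2) ^ 2) := by
    simp only [hov, Matrix.cons_val_zero, Matrix.cons_val_one, Matrix.head_cons,
      Matrix.cons_val_two, Matrix.tail_cons, ho1d, ho2d]
    rw [div_pow, div_pow, ← add_div, hr2, div_self (by positivity)]
    ring
  have h4 := hB ov hcone
  set M := ∑ α : Fin 3, ∑ β : Fin 3, |B α β| with hM
  have hMnn : 0 ≤ M := Finset.sum_nonneg fun _ _ =>
    Finset.sum_nonneg fun _ _ => abs_nonneg _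
  set Zu := Znorm cj u p with hZu
  set Zw := Znorm cj w p with hZw
  set Su := Ssum u p with hSu
  set Sw := Ssum w p with hSw
  have hZunn : 0 ≤ Zu := Znorm_nonneg cj u p
  have hZwnn : 0 ≤ Zw := Znorm_nonneg cj w p
  have hSunn : 0 ≤ Su := Ssum_nonneg u p
  have hSwnn : 0 ≤ Sw := Ssum_nonneg w p
  have hZuval : Zu = |Zd cj 1 u p| + |Zd cj 2 u p| := rfl
  have hZwval : Zw = |Zd cj 1 w p| + |Zd cj 2 w p| := rfl
  have hzux : ∀ α, |zu α| ≤ Zu := by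
    intro α
    fin_cases α
    · show |zu 0| ≤ Zu
      rw [show zu 0 = 0 from rfl, hZuval, abs_zero]
      have := abs_nonneg (Zd cj 1 u p); have := abs_nonneg (Zd cj 2 u p); linarith
    · show |zu 1| ≤ Zu
      rw [show zu 1 = Zd cj 1 u p from rfl, hZuval]
      linarith [abs_nonneg (Zd cj 2 u p)]
    · show |zu 2| ≤ Zu
      rw [show zu 2 = Zd cj 2 u p from rfl, hZuval]
      linarith [abs_nonneg (Zd cj 1 u p)]
  have hzwx : ∀ α, |zw α| ≤ Zw := by
    intro α
    fin_cases α
    · show |zw 0| ≤ Zw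
      rw [show zw 0 = 0 from rfl, hZwval, abs_zero]
      have := abs_nonneg (Zd cj 1 w p); have := abs_nonneg (Zd cj 2 w p); linarith
    · show |zw 1| ≤ Zw
      rw [show zw 1 = Zd cj 1 w p from rfl, hZwval]
      linarith [abs_nonneg (Zd cj 2 w p)]
    · show |zw 2| ≤ Zw
      rw [show zw 2 = Zd cj 2 w p from rfl, hZwval]
      linarith [abs_nonneg (Zd cj 1 w p)]
  have hovx : ∀ α, |ov α| ≤ mx := by
    intro α
    fin_cases α
    · show |ov 0| ≤ mx
      rw [show ov 0 = -cj from rfl, abs_neg, abs_of_pos hcj]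
      exact le_max_left _ _
    · show |ov 1| ≤ mx
      rw [show ov 1 = o1 from rfl]
      exact le_trans ho1 hmx1
    · show |ov 2| ≤ mx
      rw [show ov 2 = o2 from rfl]
      exact le_trans ho2 hmx1
  -- key algebraic identity
  have hzd1u : Zd cj 1 u p = cj * pd 1 u p + o1 * pd 0 u p := rfl
  have hzd2u : Zd cj 2 u p = cj * pd 2 u p + o2 * pd 0 u p := rfl
  have hzd1w : Zd cj 1 w p = cj * pd 1 w p + o1 * pd 0 w p := rfl
  have hzd2w : Zd cj 2 w p = cj * pd 2 w p + o2 * pd 0 w p := rfl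
  have key : cj ^ 2 * QB B u w p
      = (∑ α : Fin 3, ∑ β : Fin 3, B α β * zu α * zw β)
        - pd 0 w p * (∑ α : Fin 3, ∑ β : Fin 3, B α β * zu α * ov β)
        - pd 0 u p * (∑ α : Fin 3, ∑ β : Fin 3, B α β * ov α * zw β) := by
    simp only [QB, Fin.sum_univ_three, hzu, hzw, hov, Matrix.cons_val_zero,
      Matrix.cons_val_one, Matrix.head_cons, Matrix.cons_val_two, Matrix.tail_cons] at h4 ⊢
    rw [hzd1u, hzd2u, hzd1w, hzd2w]
    linear_combination (pd 0 u p * pd 0 w p) * h4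
  have b1 := bilin_bound B zu zw Zu Zw hzux hzwx
  have b2 := bilin_bound B zu ov Zu mx hzux hovx
  have b3 := bilin_bound B ov zw mx Zw hovx hzwx
  have ha : |pd 0 u p| ≤ Su := by
    rw [hSu]; unfold Ssum; rw [Fin.sum_univ_three]
    nlinarith [abs_nonneg (pd 1 u p), abs_nonneg (pd 2 u p)]
  have ha' : |pd 0 w p| ≤ Sw := by
    rw [hSw]; unfold Ssum; rw [Fin.sum_univ_three]
    nlinarith [abs_nonneg (pd 1 w p), abs_nonneg (pd 2 w p)]
  have hZwS : Zw ≤ (cj + 2) * Sw := by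
    have e1 : |Zd cj 1 w p| ≤ cj * |pd 1 w p| + |pd 0 w p| := by
      rw [hzd1w]
      calc |cj * pd 1 w p + o1 * pd 0 w p| ≤ |cj * pd 1 w p| + |o1 * pd 0 w p| := abs_add_le _ _
        _ ≤ cj * |pd 1 w p| + |pd 0 w p| := by
            rw [abs_mul, abs_mul, abs_of_pos hcj]
            have := mul_le_mul_of_nonneg_right ho1 (abs_nonneg (pd 0 w p))
            nlinarith [abs_nonneg (pd 0 w p)]
    have e2 : |Zd cj 2 w p| ≤ cj * |pd 2 w p| + |pd 0 w p| := by
      rw [hzd2w]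
      calc |cj * pd 2 w p + o2 * pd 0 w p| ≤ |cj * pd 2 w p| + |o2 * pd 0 w p| := abs_add_le _ _
        _ ≤ cj * |pd 2 w p| + |pd 0 w p| := by
            rw [abs_mul, abs_mul, abs_of_pos hcj]
            have := mul_le_mul_of_nonneg_right ho2 (abs_nonneg (pd 0 w p))
            nlinarith [abs_nonneg (pd 0 w p)]
    rw [hZw, hSw]; unfold Znorm Ssum; rw [Fin.sum_univ_three]
    have h0 := abs_nonneg (pd 0 w p)
    have h1 := abs_nonneg (pd 1 w p)
    have h2 := abs_nonneg (pd 2 w p)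
    nlinarith
  have main : cj ^ 2 * |QB B u w p| ≤ M * (cj + 2 + mx) * (Zu * Sw + Su * Zw) := by
    have habs : cj ^ 2 * |QB B u w p| = |cj ^ 2 * QB B u w p| := by
      rw [abs_mul, abs_of_pos (by positivity : (0:ℝ) < cj ^ 2)]
    rw [habs, key]
    have step : |(∑ α : Fin 3, ∑ β : Fin 3, B α β * zu α * zw β)
        - pd 0 w p * (∑ α : Fin 3, ∑ β : Fin 3, B α β * zu α * ov β)
        - pd 0 u p * (∑ α : Fin 3, ∑ β : Fin 3, B α β * ov α * zw β)|
        ≤ M * Zu * Zw + Sw * (M * Zu * mx) + Su * (M * mx * Zw) := by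
      calc _ ≤ |(∑ α : Fin 3, ∑ β : Fin 3, B α β * zu α * zw β)
            - pd 0 w p * (∑ α : Fin 3, ∑ β : Fin 3, B α β * zu α * ov β)|
            + |pd 0 u p * (∑ α : Fin 3, ∑ β : Fin 3, B α β * ov α * zw β)| := abs_sub _ _
        _ ≤ |∑ α : Fin 3, ∑ β : Fin 3, B α β * zu α * zw β|
            + |pd 0 w p * (∑ α : Fin 3, ∑ β : Fin 3, B α β * zu α * ov β)|
            + |pd 0 u p * (∑ α : Fin 3, ∑ β : Fin 3, B α β * ov α * zw β)| := by
            have := abs_sub (∑ α : Fin 3, ∑ β : Fin 3, B α β * zu α * zw β)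
              (pd 0 w p * (∑ α : Fin 3, ∑ β : Fin 3, B α β * zu α * ov β))
            linarith
        _ ≤ M * Zu * Zw + Sw * (M * Zu * mx) + Su * (M * mx * Zw) := by
            rw [abs_mul, abs_mul]
            have t2 : |pd 0 w p| * |∑ α : Fin 3, ∑ β : Fin 3, B α β * zu α * ov β|
                ≤ Sw * (M * Zu * mx) :=
              mul_le_mul ha' b2 (abs_nonneg _) hSwnn
            have t3 : |pd 0 u p| * |∑ α : Fin 3, ∑ β : Fin 3, B α β * ov α * zw β|
                ≤ Su * (M * mx * Zw) :=
              mul_le_mul ha b3 (abs_nonneg _) hSunn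
            linarith
    refine le_trans step ?_
    have k1 : M * Zu * Zw ≤ M * Zu * ((cj + 2) * Sw) := by
      apply mul_le_mul_of_nonneg_left hZwS (by positivity)
    nlinarith [mul_nonneg (mul_nonneg hMnn (by linarith : (0:ℝ) ≤ cj + 2))
        (mul_nonneg hSunn hZwnn),
      mul_nonneg (mul_nonneg hMnn hmx0.le) (mul_nonneg hZunn hSwnn)]
  rw [div_mul_eq_mul_div, le_div_iff₀ (by positivity : (0:ℝ) < cj ^ 2)]
  calc |QB B u w p| * cj ^ 2 = cj ^ 2 * |QB B u w p| := by ring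
    _ ≤ M * (cj + 2 + mx) * (Zu * Sw + Su * Zw) := main
/-! ### final assembly -/

lemma mem_MIdx {k : ℕ} {a : Fin 5 → ℕ} : a ∈ MIdx k ↔ (∑ j, a j) ≤ k := by
  unfold MIdx
  simp only [Finset.mem_biUnion, Finset.mem_range, Finset.Nat.mem_antidiagonalTuple]
  constructor
  · rintro ⟨n, hn, rfl⟩; omega
  · intro h; exact ⟨∑ j, a j, by omega, rfl⟩

lemma mem_pairIdx {k : ℕ} {bc : (Fin 5 → ℕ) × (Fin 5 → ℕ)} :
    bc ∈ pairIdx k ↔ (∑ j, bc.1 j) + (∑ j, bc.2 j) ≤ k := by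
  unfold pairIdx
  simp only [Finset.mem_filter, Finset.mem_product, mem_MIdx]
  omega

def RHSsum (cj : ℝ) (k : ℕ) (v : Pt → ℝ) (p : Pt) : ℝ :=
  ∑ bc ∈ pairIdx k, Znorm cj (GamPow bc.1 v) p * (∑ α : Fin 3, |GamPow bc.2 (pd α v) p|)

lemma RHS_term_nonneg (cj : ℝ) (v : Pt → ℝ) (p : Pt) (bc : (Fin 5 → ℕ) × (Fin 5 → ℕ)) :
    0 ≤ Znorm cj (GamPow bc.1 v) p * (∑ α : Fin 3, |GamPow bc.2 (pd α v) p|) :=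
  mul_nonneg (Znorm_nonneg _ _ _) (Finset.sum_nonneg fun _ _ => abs_nonneg _)

lemma RHS_nonneg (cj : ℝ) (k : ℕ) (v : Pt → ℝ) (p : Pt) : 0 ≤ RHSsum cj k v p :=
  Finset.sum_nonneg fun bc _ => RHS_term_nonneg cj v p bc

lemma pair_le_R (cj : ℝ) (k : ℕ) (bm cm : Fin 5 → ℕ)
    (h : (∑ j, bm j) + (∑ j, cm j) ≤ k) (v : Pt → ℝ) (p : Pt) :
    Znorm cj (GamPow bm v) p * (∑ α : Fin 3, |GamPow cm (pd α v) p|) ≤ RHSsum cj k v p := by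
  have hmem : ((bm, cm) : (Fin 5 → ℕ) × (Fin 5 → ℕ)) ∈ pairIdx k :=
    mem_pairIdx.mpr (by simpa using h)
  exact Finset.single_le_sum (f := fun bc : (Fin 5 → ℕ) × (Fin 5 → ℕ) =>
      Znorm cj (GamPow bc.1 v) p * (∑ α : Fin 3, |GamPow bc.2 (pd α v) p|))
    (fun bc _ => RHS_term_nonneg cj v p bc) hmem

lemma single_le_R (cj : ℝ) (k : ℕ) (bm cm : Fin 5 → ℕ)
    (h : (∑ j, bm j) + (∑ j, cm j) ≤ k) (v : Pt → ℝ) (p : Pt) (β : Fin 3) :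
    Znorm cj (GamPow bm v) p * |GamPow cm (pd β v) p| ≤ RHSsum cj k v p := by
  have h1 : |GamPow cm (pd β v) p| ≤ ∑ α : Fin 3, |GamPow cm (pd α v) p| :=
    Finset.single_le_sum (f := fun α : Fin 3 => |GamPow cm (pd α v) p|)
      (fun α _ => abs_nonneg _) (Finset.mem_univ β)
  exact le_trans (mul_le_mul_of_nonneg_left h1 (Znorm_nonneg _ _ _))
    (pair_le_R cj k bm cm h v p)

lemma Zn_evalD_le (cj : ℝ) (k : ℕ) (bm : Fin 5 → ℕ) (L : List (ℝ × (Fin 5 → ℕ) × Fin 3))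
    (v : Pt → ℝ) (p : Pt)
    (hterm : ∀ t ∈ L, (∑ j, bm j) + (∑ j, t.2.1 j) ≤ k) :
    Znorm cj (GamPow bm v) p * |evalD L v p|
      ≤ (L.map fun t => |t.1|).sum * RHSsum cj k v p := by
  induction L with
  | nil => simp [evalD, RHS_nonneg]
  | cons t rest ih =>
    have htail := ih (fun s hs => hterm s (List.mem_cons_of_mem _ hs))
    have hZn := Znorm_nonneg cj (GamPow bm v) p
    have h1 : |evalD (t :: rest) v p| ≤ |t.1| * |GamPow t.2.1 (pd t.2.2 v) p|
        + |evalD rest v p| := by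
      rw [evalD_cons]
      exact le_trans (abs_add_le _ _) (by rw [abs_mul])
    have h2 : Znorm cj (GamPow bm v) p * |evalD (t :: rest) v p|
        ≤ |t.1| * (Znorm cj (GamPow bm v) p * |GamPow t.2.1 (pd t.2.2 v) p|)
          + Znorm cj (GamPow bm v) p * |evalD rest v p| := by
      have := mul_le_mul_of_nonneg_left h1 hZn
      nlinarith [abs_nonneg t.1, abs_nonneg (GamPow t.2.1 (pd t.2.2 v) p)]
    have h3 : |t.1| * (Znorm cj (GamPow bm v) p * |GamPow t.2.1 (pd t.2.2 v) p|)
        ≤ |t.1| * RHSsum cj k v p :=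
      mul_le_mul_of_nonneg_left
        (single_le_R cj k bm t.2.1 (hterm t (List.mem_cons_self)) v p t.2.2)
        (abs_nonneg _)
    calc Znorm cj (GamPow bm v) p * |evalD (t :: rest) v p|
        ≤ |t.1| * RHSsum cj k v p + (rest.map fun t => |t.1|).sum * RHSsum cj k v p := by
          linarith
      _ = _ := by simp [List.map_cons, List.sum_cons]; ring

/-- bound for one Q-item. -/
lemma item_bound (cj : ℝ) (hcj : 0 < cj) (k : ℕ) (t : QItem) (htn : NullC cj t.1)
    (hts : (∑ j, t.2.1 j) + (∑ j, t.2.2 j) ≤ k) :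
    ∃ C : ℝ, 0 ≤ C ∧ ∀ (U : Set Pt), IsOpen U → ∀ v, Sm U v → ∀ p ∈ U,
      ¬(p.1 = 0 ∧ p.2.1 = 0) →
      |QB t.1 (GamPow t.2.1 v) (GamPow t.2.2 v) p| ≤ C * RHSsum cj k v p := by
  set K := (∑ α : Fin 3, ∑ β : Fin 3, |t.1 α β|) * (cj + 2 + max cj 1) / cj ^ 2 with hK
  have hKnn : 0 ≤ K := by
    apply div_nonneg _ (by positivity)
    apply mul_nonneg (Finset.sum_nonneg fun _ _ => Finset.sum_nonneg fun _ _ => abs_nonneg _)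
    have : (1:ℝ) ≤ max cj 1 := le_max_right _ _
    nlinarith
  -- conversion lists for both slots
  have hconvC : ∀ α : Fin 3, ∃ L, (∀ s ∈ L, (∑ j, s.2.1 j) ≤ ∑ j, t.2.2 j) ∧
      ∀ (U : Set Pt), IsOpen U → ∀ w, Sm U w → ∀ p ∈ U,
        pd α (GamPow t.2.2 w) p = evalD L w p := fun α => CONV t.2.2 α
  have hconvB : ∀ α : Fin 3, ∃ L, (∀ s ∈ L, (∑ j, s.2.1 j) ≤ ∑ j, t.2.1 j) ∧
      ∀ (U : Set Pt), IsOpen U → ∀ w, Sm U w → ∀ p ∈ U,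
        pd α (GamPow t.2.1 w) p = evalD L w p := fun α => CONV t.2.1 α
  choose LC hLC1 hLC2 using hconvC
  choose LB hLB1 hLB2 using hconvB
  set CC := ∑ α : Fin 3, ((LC α).map fun s => |s.1|).sum with hCC
  set CB := ∑ α : Fin 3, ((LB α).map fun s => |s.1|).sum with hCB
  have habs : ∀ (L : List (ℝ × (Fin 5 → ℕ) × Fin 3)), 0 ≤ (L.map fun s => |s.1|).sum := by
    intro L
    apply List.sum_nonneg
    intro x hx
    simp only [List.mem_map] at hx
    obtain ⟨s, _, rfl⟩ := hx
    exact abs_nonneg _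
  have hCCnn : 0 ≤ CC := Finset.sum_nonneg fun α _ => habs (LC α)
  have hCBnn : 0 ≤ CB := Finset.sum_nonneg fun α _ => habs (LB α)
  refine ⟨K * (CC + CB), by positivity, ?_⟩
  intro U hU v hv p hp hxne
  have hR := RHS_nonneg cj k v p
  have hnb := null_bound cj hcj t.1 htn (GamPow t.2.1 v) (GamPow t.2.2 v) p hxne
  -- bound Znorm(Γ^b) * Ssum(Γ^c)
  have hbd1 : Znorm cj (GamPow t.2.1 v) p * Ssum (GamPow t.2.2 v) p ≤ CC * RHSsum cj k v p := by
    unfold Ssum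
    rw [Finset.mul_sum]
    rw [hCC, Finset.sum_mul]
    refine Finset.sum_le_sum fun α _ => ?_
    rw [hLC2 α U hU v hv p hp]
    exact Zn_evalD_le cj k t.2.1 (LC α) v p (fun s hs => by have := hLC1 α s hs; omega)
  have hbd2 : Ssum (GamPow t.2.1 v) p * Znorm cj (GamPow t.2.2 v) p ≤ CB * RHSsum cj k v p := by
    rw [mul_comm]
    unfold Ssum
    rw [Finset.mul_sum]
    rw [hCB, Finset.sum_mul]
    refine Finset.sum_le_sum fun α _ => ?_
    rw [hLB2 α U hU v hv p hp]
    exact Zn_evalD_le cj k t.2.2 (LB α) v p (fun s hs => by have := hLB1 α s hs; omega)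
  calc |QB t.1 (GamPow t.2.1 v) (GamPow t.2.2 v) p|
      ≤ K * (Znorm cj (GamPow t.2.1 v) p * Ssum (GamPow t.2.2 v) p
          + Ssum (GamPow t.2.1 v) p * Znorm cj (GamPow t.2.2 v) p) := hnb
    _ ≤ K * (CC * RHSsum cj k v p + CB * RHSsum cj k v p) := by
        apply mul_le_mul_of_nonneg_left _ hKnn
        linarith
    _ = K * (CC + CB) * RHSsum cj k v p := by ring

lemma list_bound (cj : ℝ) (hcj : 0 < cj) (k : ℕ) (L : List QItem)
    (hL : ∀ t ∈ L, NullC cj t.1 ∧ (∑ j, t.2.1 j) + (∑ j, t.2.2 j) ≤ k) :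
    ∃ C : ℝ, 0 ≤ C ∧ ∀ (U : Set Pt), IsOpen U → ∀ v, Sm U v → ∀ p ∈ U,
      ¬(p.1 = 0 ∧ p.2.1 = 0) → |evalQ L v p| ≤ C * RHSsum cj k v p := by
  induction L with
  | nil => exact ⟨0, le_rfl, by intros; simp [evalQ]⟩
  | cons t rest ih =>
    obtain ⟨Cr, hCr0, hCr⟩ := ih (fun s hs => hL s (List.mem_cons_of_mem _ hs))
    obtain ⟨Ct, hCt0, hCt⟩ := item_bound cj hcj k t (hL t (List.mem_cons_self)).1
      (hL t (List.mem_cons_self)).2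
    refine ⟨Ct + Cr, by positivity, ?_⟩
    intro U hU v hv p hp hxne
    have h1 := hCt U hU v hv p hp hxne
    have h2 := hCr U hU v hv p hp hxne
    calc |evalQ (t :: rest) v p|
        ≤ |QB t.1 (GamPow t.2.1 v) (GamPow t.2.2 v) p| + |evalQ rest v p| := by
          rw [evalQ_cons]; exact abs_add_le _ _
      _ ≤ Ct * RHSsum cj k v p + Cr * RHSsum cj k v p := by linarith
      _ = (Ct + Cr) * RHSsum cj k v p := by ring

/-- null-form estimate for the semilinear quadratic terms (Proposition 2.1, (2.10)). -/
theorem stmt4 (k : ℕ) (hk : 0 < k) (cj : ℝ) (hcj : 0 < cj)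
    (b : Fin 3 → Fin 3 → ℝ)
    (hnull : ∀ X : Fin 3 → ℝ, (X 0) ^ 2 = cj ^ 2 * ((X 1) ^ 2 + (X 2) ^ 2) →
      ∑ α : Fin 3, ∑ β : Fin 3, b α β * X α * X β = 0) :
    ∃ C : ℝ, 0 < C ∧ ∀ T : ℝ, 1 < T → ∀ v : Pt → ℝ,
      ContDiffOn ℝ (⊤ : ℕ∞) v {p : Pt | p.2.2 < T} →
      ∀ p : Pt, ¬(p.1 = 0 ∧ p.2.1 = 0) → 0 ≤ p.2.2 → p.2.2 < T →
        ptNorm k (fun q => ∑ α : Fin 3, ∑ β : Fin 3, b α β * pd α v q * pd β v q) p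
          ≤ C * ∑ bc ∈ pairIdx k,
              Znorm cj (GamPow bc.1 v) p * (∑ α : Fin 3, |GamPow bc.2 (pd α v) p|) := by
  have hb : NullC cj b := hnull
  have key : ∀ a : Fin 5 → ℕ, ∃ C : ℝ, 0 ≤ C ∧ ((∑ j, a j) ≤ k →
      ∀ (U : Set Pt), IsOpen U → ∀ v, Sm U v → ∀ p ∈ U, ¬(p.1 = 0 ∧ p.2.1 = 0) →
      |GamPow a (fun q => QB b v v q) p| ≤ C * RHSsum cj k v p) := by
    intro a
    by_cases hak : (∑ j, a j) ≤ k
    · obtain ⟨L, hL1, hL2⟩ := MAIN cj b hb a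
      obtain ⟨C, hC0, hC⟩ := list_bound cj hcj k L
        (fun t ht => ⟨(hL1 t ht).1, le_trans (hL1 t ht).2 hak⟩)
      exact ⟨C, hC0, fun _ U hU v hv p hp hx => by
        rw [hL2 U hU v hv p hp]; exact hC U hU v hv p hp hx⟩
    · exact ⟨0, le_rfl, fun h => absurd h hak⟩
  choose C hC0 hC using key
  have hCsum : 0 ≤ ∑ a ∈ MIdx k, C a := Finset.sum_nonneg fun a _ => hC0 a
  refine ⟨(∑ a ∈ MIdx k, C a) + 1, by linarith, ?_⟩
  intro T hT v hv p hxne ht0 htT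
  have hU : IsOpen {q : Pt | q.2.2 < T} := isOpen_lt (by fun_prop) continuous_const
  have hp : p ∈ {q : Pt | q.2.2 < T} := htT
  have hv' : Sm {q : Pt | q.2.2 < T} v := hv
  have hpt : ptNorm k (fun q => ∑ α : Fin 3, ∑ β : Fin 3, b α β * pd α v q * pd β v q) p
      = ∑ a ∈ MIdx k, |GamPow a (fun q => QB b v v q) p| := rfl
  have hRHS : (∑ bc ∈ pairIdx k, Znorm cj (GamPow bc.1 v) p
      * (∑ α : Fin 3, |GamPow bc.2 (pd α v) p|)) = RHSsum cj k v p := rfl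
  rw [hpt, hRHS]
  have step : ∀ a ∈ MIdx k, |GamPow a (fun q => QB b v v q) p| ≤ C a * RHSsum cj k v p :=
    fun a ha => hC a (mem_MIdx.mp ha) _ hU v hv' p hp hxne
  calc ∑ a ∈ MIdx k, |GamPow a (fun q => QB b v v q) p|
      ≤ ∑ a ∈ MIdx k, C a * RHSsum cj k v p := Finset.sum_le_sum step
    _ = (∑ a ∈ MIdx k, C a) * RHSsum cj k v p := by rw [Finset.sum_mul]
    _ ≤ ((∑ a ∈ MIdx k, C a) + 1) * RHSsum cj k v p := by
        nlinarith [RHS_nonneg cj k v p]
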